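/- arXiv:1412.6700 — 7 statements merged into one kernel-verified Lean document; each statement's English description precedes it below -/
import Mathlib

section
/- Suppose the characteristic exponent ψ is real-valued (ψ(ξ) ∈ ℝ for all ξ ∈ ℝ^d). Then for all λ > 0, t > 0 and κ > 0, the exponential negative moment is infinite: E e^{λ|X_t|^{-κ}} = ∫ e^{λ|x|^{-κ}} μ_t(dx) = ∞. -/
/-!
Since `ψ` is real, the characteristic function `φ = e^{-tψ}` of `X_t` is nonnegative. Integrating
it against the Gaussian weight `e^{-b‖ξ‖²}` gives, by Fubini and the Fourier transform of the
Gaussian, `∫ e^{-b‖ξ‖²} φ(ξ) dξ = (π/b)^{d/2} E e^{-‖X_t‖²/(4b)}`, and the left side grows as `b`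
decreases because `φ ≥ 0`. Comparing with `b = 1` gives `E e^{-‖X_t‖²/(4b)} ≥ c b^{d/2}` with
`c = E e^{-‖X_t‖²/4} > 0`, hence, for `b = ε⁴`, the small-ball bound
`P(‖X_t‖ ≤ ε) ≥ c ε^{2d} - e^{-1/(4ε²)}`. Such polynomially decaying small-ball probabilities
cannot compensate `e^{λ ε^{-κ}}`, so the exponential negative moment is infinite.
-/

open MeasureTheory Filter Set
open scoped ENNReal Classical

section Asymptotics

open Real Topology

theorem tendsto_pow_mul_exp_neg_mul_rpow_atTop_nhds_zero (n : ℕ) {b κ : ℝ} (hb : 0 < b)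
    (hκ : 0 < κ) : Tendsto (fun s : ℝ ↦ s ^ n * rexp (-b * s ^ κ)) atTop (𝓝 0) := by
  refine ((tendsto_rpow_mul_exp_neg_mul_atTop_nhds_zero (n / κ) b hb).comp
    (tendsto_rpow_atTop hκ)).congr' ?_
  filter_upwards [eventually_ge_atTop 0] with s hs
  simp only [Function.comp_apply, ← rpow_mul hs, mul_div_cancel₀ _ hκ.ne', rpow_natCast]

end Asymptotics

section NormedGroup

open Real Metric

variable {E : Type*} [NormedAddCommGroup E] [MeasurableSpace E] [OpensMeasurableSpace E]

theorem integral_exp_neg_sq_norm_div_le (μ : Measure E) [IsProbabilityMeasure μ] {ε s : ℝ}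
    (hε : 0 ≤ ε) (hs : 0 < s) :
    ∫ x, rexp (-‖x‖ ^ 2 / s) ∂μ ≤ μ.real (closedBall 0 ε) + rexp (-ε ^ 2 / s) := by
  calc ∫ x, rexp (-‖x‖ ^ 2 / s) ∂μ
      ≤ ∫ x, ((closedBall (0 : E) ε).indicator 1 x + rexp (-ε ^ 2 / s)) ∂μ := by
        refine integral_mono_of_nonneg (ae_of_all _ fun x ↦ (exp_pos _).le)
          (((integrable_const 1).indicator measurableSet_closedBall).add (integrable_const _))
          (ae_of_all _ fun x ↦ ?_)
        by_cases hx : x ∈ closedBall (0 : E) ε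
        · have : rexp (-‖x‖ ^ 2 / s) ≤ 1 :=
            exp_le_one_iff.2 (by rw [neg_div]; exact neg_nonpos.2 (by positivity))
          simp only [indicator_of_mem hx, Pi.one_apply]
          linarith [exp_pos (-ε ^ 2 / s)]
        · have hεx : ε ≤ ‖x‖ := by
            rw [mem_closedBall_zero_iff, not_le] at hx
            exact hx.le
          simp only [indicator_of_notMem hx, zero_add]
          gcongr
    _ = μ.real (closedBall 0 ε) + rexp (-ε ^ 2 / s) := by
        rw [integral_add ((integrable_const 1).indicator measurableSet_closedBall)
          (integrable_const _), integral_indicator_one measurableSet_closedBall]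
        simp

theorem ofReal_exp_mul_rpow_neg_mul_measure_closedBall_le_lintegral [DecidableEq E]
    (μ : Measure E) {l κ ε : ℝ} (hl : 0 ≤ l) (hκ : 0 ≤ κ) :
    ENNReal.ofReal (rexp (l * ε ^ (-κ))) * μ (closedBall 0 ε)
      ≤ ∫⁻ x, (if x = 0 then ⊤ else ENNReal.ofReal (rexp (l * ‖x‖ ^ (-κ)))) ∂μ := by
  rw [← lintegral_indicator_const measurableSet_closedBall]
  refine lintegral_mono fun x ↦ ?_
  by_cases hx : x ∈ closedBall (0 : E) ε
  · rw [indicator_of_mem hx]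
    split_ifs with hx0
    · exact le_top
    · have hxε : ‖x‖ ≤ ε := by simpa using hx
      exact ENNReal.ofReal_le_ofReal <| exp_le_exp.2 <| mul_le_mul_of_nonneg_left
        (rpow_le_rpow_of_nonpos (norm_pos_iff.2 hx0) hxε (neg_nonpos.2 hκ)) hl
  · simp [indicator_of_notMem hx]

end NormedGroup

section InnerProductSpace

open Complex Real Metric Topology
open scoped InnerProductSpace ComplexOrder

variable {V : Type*} [NormedAddCommGroup V] [InnerProductSpace ℝ V] [FiniteDimensional ℝ V]
  [MeasurableSpace V] [BorelSpace V]

theorem integrable_cexp_neg_mul_sq_norm {b : ℂ} (hb : 0 < b.re) :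
    Integrable fun ξ : V ↦ cexp (-b * ‖ξ‖ ^ 2) := by
  simpa using GaussianFourier.integrable_cexp_neg_mul_sq_norm_add hb 0 (0 : V)

theorem integrable_cexp_neg_mul_sq_norm_mul_charFun (μ : Measure V) [IsFiniteMeasure μ] {b : ℂ}
    (hb : 0 < b.re) : Integrable (fun ξ : V ↦ cexp (-b * ‖ξ‖ ^ 2) * charFun μ ξ) :=
  (integrable_cexp_neg_mul_sq_norm hb).mul_bdd stronglyMeasurable_charFun.aestronglyMeasurable
    (ae_of_all _ norm_charFun_le)

theorem integral_cexp_neg_mul_sq_norm_mul_charFun (μ : Measure V) [IsFiniteMeasure μ] {b : ℂ}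
    (hb : 0 < b.re) :
    ∫ ξ : V, cexp (-b * ‖ξ‖ ^ 2) * charFun μ ξ
      = (π / b) ^ (Module.finrank ℝ V / 2 : ℂ) * ∫ x, cexp (-‖x‖ ^ 2 / (4 * b)) ∂μ := by
  have hprod : Integrable (Function.uncurry fun (ξ x : V) ↦
      cexp (-b * ‖ξ‖ ^ 2) * cexp (⟪x, ξ⟫_ℝ * I)) (volume.prod μ) := by
    refine ((integrable_cexp_neg_mul_sq_norm hb).norm.mul_prod (integrable_const (1 : ℝ))).mono'
      (by fun_prop) (ae_of_all _ ?_)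
    rintro ⟨ξ, x⟩
    simp only [Function.uncurry_apply_pair, norm_mul, norm_exp_ofReal_mul_I, mul_one, le_refl]
  calc ∫ ξ : V, cexp (-b * ‖ξ‖ ^ 2) * charFun μ ξ
      = ∫ ξ : V, ∫ x, cexp (-b * ‖ξ‖ ^ 2) * cexp (⟪x, ξ⟫_ℝ * I) ∂μ := by
        simp_rw [charFun_apply, integral_const_mul]
    _ = ∫ x, (∫ ξ : V, cexp (-b * ‖ξ‖ ^ 2 + I * ⟪x, ξ⟫_ℝ)) ∂μ := by
        rw [integral_integral_swap hprod]
        simp_rw [← Complex.exp_add, mul_comm _ I]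
    _ = ∫ x, (π / b) ^ (Module.finrank ℝ V / 2 : ℂ) * cexp (-‖x‖ ^ 2 / (4 * b)) ∂μ := by
        simp_rw [GaussianFourier.integral_cexp_neg_mul_sq_norm_add hb, I_sq, neg_one_mul]
    _ = _ := integral_const_mul _ _

theorem re_cexp_neg_mul_sq_mul (b r : ℝ) (z : ℂ) :
    (cexp (-(b : ℂ) * (r : ℂ) ^ 2) * z).re = rexp (-b * r ^ 2) * z.re := by
  rw [← ofReal_pow, ← ofReal_neg, ← ofReal_mul, ← ofReal_exp, re_ofReal_mul]

theorem integrable_exp_neg_mul_sq_norm_mul_re_charFun (μ : Measure V) [IsFiniteMeasure μ] {b : ℝ}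
    (hb : 0 < b) : Integrable (fun ξ : V ↦ rexp (-b * ‖ξ‖ ^ 2) * (charFun μ ξ).re) := by
  simpa only [RCLike.re_to_complex, re_cexp_neg_mul_sq_mul] using
    (integrable_cexp_neg_mul_sq_norm_mul_charFun μ (b := b) (by simpa)).re

theorem integral_exp_neg_mul_sq_norm_mul_re_charFun (μ : Measure V) [IsFiniteMeasure μ] {b : ℝ}
    (hb : 0 < b) :
    ∫ ξ : V, rexp (-b * ‖ξ‖ ^ 2) * (charFun μ ξ).re
      = (π / b) ^ (Module.finrank ℝ V / 2 : ℝ) * ∫ x, rexp (-‖x‖ ^ 2 / (4 * b)) ∂μ := by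
  have h := congrArg re (integral_cexp_neg_mul_sq_norm_mul_charFun μ (b := b) (by simpa))
  rw [← RCLike.re_to_complex,
    ← integral_re (integrable_cexp_neg_mul_sq_norm_mul_charFun μ (by simpa))] at h
  have hpow : ((π : ℂ) / b) ^ (Module.finrank ℝ V / 2 : ℂ)
      = (((π / b) ^ (Module.finrank ℝ V / 2 : ℝ) : ℝ) : ℂ) := by
    rw [ofReal_cpow (by positivity)]; push_cast; rfl
  have hgauss : ∫ x, cexp (-‖x‖ ^ 2 / (4 * b)) ∂μ
      = ((∫ x, rexp (-‖x‖ ^ 2 / (4 * b)) ∂μ : ℝ) : ℂ) := by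
    rw [← integral_complex_ofReal]; push_cast; rfl
  simpa only [RCLike.re_to_complex, re_cexp_neg_mul_sq_mul, hpow, hgauss, re_ofReal_mul,
    ofReal_re] using h

theorem rpow_mul_integral_exp_neg_sq_norm_le_of_charFun_nonneg (μ : Measure V)
    [IsFiniteMeasure μ] (hμ : ∀ ξ, 0 ≤ charFun μ ξ) {b : ℝ} (hb : 0 < b) (hb1 : b ≤ 1) :
    b ^ (Module.finrank ℝ V / 2 : ℝ) * ∫ x, rexp (-‖x‖ ^ 2 / 4) ∂μ
      ≤ ∫ x, rexp (-‖x‖ ^ 2 / (4 * b)) ∂μ := by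
  have hmono : ∫ ξ : V, rexp (-1 * ‖ξ‖ ^ 2) * (charFun μ ξ).re
      ≤ ∫ ξ : V, rexp (-b * ‖ξ‖ ^ 2) * (charFun μ ξ).re := by
    refine integral_mono_of_nonneg (ae_of_all _ fun ξ ↦ ?_)
      (integrable_exp_neg_mul_sq_norm_mul_re_charFun μ hb) (ae_of_all _ fun ξ ↦ ?_)
    · exact mul_nonneg (exp_pos _).le (Complex.nonneg_iff.1 (hμ ξ)).1
    · refine mul_le_mul_of_nonneg_right (exp_le_exp.2 ?_) (Complex.nonneg_iff.1 (hμ ξ)).1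
      nlinarith [sq_nonneg ‖ξ‖]
  rw [integral_exp_neg_mul_sq_norm_mul_re_charFun μ one_pos,
    integral_exp_neg_mul_sq_norm_mul_re_charFun μ hb, div_rpow pi_pos.le hb.le, mul_one,
    div_one] at hmono
  have hπ : 0 < π ^ (Module.finrank ℝ V / 2 : ℝ) := by positivity
  have hbpow : 0 < b ^ (Module.finrank ℝ V / 2 : ℝ) := by positivity
  rw [div_mul_eq_mul_div, le_div_iff₀ hbpow] at hmono
  exact le_of_mul_le_mul_left (by linarith) hπ

theorem pow_mul_integral_exp_neg_sq_norm_le_measureReal_closedBall_add (μ : Measure V)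
    [IsProbabilityMeasure μ] (hμ : ∀ ξ, 0 ≤ charFun μ ξ) {ε : ℝ} (hε : 0 < ε) (hε1 : ε ≤ 1) :
    ε ^ (2 * Module.finrank ℝ V) * ∫ x, rexp (-‖x‖ ^ 2 / 4) ∂μ
      ≤ μ.real (closedBall 0 ε) + rexp (-ε⁻¹ ^ 2 / 4) := by
  have hpow : (ε ^ 4) ^ (Module.finrank ℝ V / 2 : ℝ) = ε ^ (2 * Module.finrank ℝ V) := by
    rw [← rpow_natCast ε 4, ← rpow_mul hε.le, ← rpow_natCast]
    push_cast
    ring_nf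
  have htail : -ε ^ 2 / (4 * ε ^ 4) = -ε⁻¹ ^ 2 / 4 := by field_simp
  calc ε ^ (2 * Module.finrank ℝ V) * ∫ x, rexp (-‖x‖ ^ 2 / 4) ∂μ
      = (ε ^ 4) ^ (Module.finrank ℝ V / 2 : ℝ) * ∫ x, rexp (-‖x‖ ^ 2 / 4) ∂μ := by rw [hpow]
    _ ≤ ∫ x, rexp (-‖x‖ ^ 2 / (4 * ε ^ 4)) ∂μ :=
        rpow_mul_integral_exp_neg_sq_norm_le_of_charFun_nonneg μ hμ (by positivity)
          (pow_le_one₀ hε.le hε1)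
    _ ≤ μ.real (closedBall 0 ε) + rexp (-ε⁻¹ ^ 2 / 4) := by
        rw [← htail]
        exact integral_exp_neg_sq_norm_div_le μ hε.le (by positivity)

theorem lintegral_exp_mul_rpow_neg_eq_top_of_charFun_nonneg [DecidableEq V] (μ : Measure V)
    [IsProbabilityMeasure μ] (hμ : ∀ ξ, 0 ≤ charFun μ ξ) {l κ : ℝ} (hl : 0 < l) (hκ : 0 < κ) :
    ∫⁻ x, (if x = 0 then ⊤ else ENNReal.ofReal (rexp (l * ‖x‖ ^ (-κ)))) ∂μ = ⊤ := by
  set n := 2 * Module.finrank ℝ V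
  set c := ∫ x, rexp (-‖x‖ ^ 2 / 4) ∂μ
  have hc : 0 < c := by
    refine integral_exp_pos ((integrable_const 1).mono' (by fun_prop) (ae_of_all _ fun x ↦ ?_))
    rw [norm_of_nonneg (exp_pos _).le, exp_le_one_iff, neg_div]
    exact neg_nonpos.2 (by positivity)
  by_contra hI
  set I := (∫⁻ x, (if x = 0 then ⊤ else ENNReal.ofReal (rexp (l * ‖x‖ ^ (-κ)))) ∂μ).toReal
  have hbound : ∀ s ≥ (1 : ℝ),
      c ≤ s ^ n * rexp (-l * s ^ κ) * I + s ^ n * rexp (-(1 / 4) * s ^ (2 : ℝ)) := by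
    intro s hs
    have hs0 : 0 < s := one_pos.trans_le hs
    have hball : μ.real (closedBall 0 s⁻¹) ≤ rexp (-l * s ^ κ) * I := by
      have h := ENNReal.toReal_mono hI
        (ofReal_exp_mul_rpow_neg_mul_measure_closedBall_le_lintegral μ (ε := s⁻¹) hl.le hκ.le)
      rw [ENNReal.toReal_mul, ENNReal.toReal_ofReal (exp_pos _).le, inv_rpow hs0.le,
        rpow_neg hs0.le, inv_inv] at h
      rw [neg_mul, Real.exp_neg, ← div_eq_inv_mul, le_div_iff₀' (exp_pos _)]
      exact h
    have hsmall := pow_mul_integral_exp_neg_sq_norm_le_measureReal_closedBall_add μ hμ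
      (inv_pos.2 hs0) (inv_le_one_of_one_le₀ hs)
    rw [inv_inv, inv_pow] at hsmall
    have hsn : 0 < s ^ n := pow_pos hs0 n
    calc c = s ^ n * ((s ^ n)⁻¹ * c) := by field_simp
      _ ≤ s ^ n * (μ.real (closedBall 0 s⁻¹) + rexp (-s ^ 2 / 4)) := by gcongr
      _ ≤ s ^ n * (rexp (-l * s ^ κ) * I + rexp (-s ^ 2 / 4)) := by gcongr
      _ = _ := by rw [rpow_two]; ring_nf
  have hlim : Tendsto (fun s : ℝ ↦ s ^ n * rexp (-l * s ^ κ) * I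
      + s ^ n * rexp (-(1 / 4) * s ^ (2 : ℝ))) atTop (𝓝 0) := by
    simpa using ((tendsto_pow_mul_exp_neg_mul_rpow_atTop_nhds_zero n hl hκ).mul_const I).add
      (tendsto_pow_mul_exp_neg_mul_rpow_atTop_nhds_zero n (by norm_num : (0 : ℝ) < 1 / 4) two_pos)
  exact hc.not_ge (ge_of_tendsto hlim ((eventually_ge_atTop 1).mono hbound))

end InnerProductSpace

theorem levy_exponential_negative_moment_infinite_general
    (d : ℕ)
    (ψ : EuclideanSpace ℝ (Fin d) → ℂ)
    (μ : ℝ → Measure (EuclideanSpace ℝ (Fin d)))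
    (hμ : ∀ t > 0, IsProbabilityMeasure (μ t))
    (hchar : ∀ t > 0, ∀ ξ, ∫ x, Complex.exp (Complex.I * ((inner ℝ ξ x : ℝ) : ℂ)) ∂(μ t)
        = Complex.exp (-(t : ℂ) * ψ ξ))
    (hreal : ∀ ξ, (ψ ξ).im = 0) :
    ∀ l : ℝ, 0 < l → ∀ t : ℝ, 0 < t → ∀ κ : ℝ, 0 < κ →
      ∫⁻ x, (if x = 0 then (⊤ : ℝ≥0∞)
        else ENNReal.ofReal (Real.exp (l * ‖x‖ ^ (-κ)))) ∂(μ t) = ⊤ := by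
  intro l hl t ht κ hκ
  have := hμ t ht
  refine lintegral_exp_mul_rpow_neg_eq_top_of_charFun_nonneg (μ t) (fun ξ ↦ ?_) hl hκ
  have hexponent : -(t : ℂ) * ψ ξ = ((-t * (ψ ξ).re : ℝ) : ℂ) := by
    apply Complex.ext <;> simp [hreal ξ]
  have hcharFun : charFun (μ t) ξ = Complex.exp (-(t : ℂ) * ψ ξ) := by
    rw [← hchar t ht ξ, charFun_apply]
    simp_rw [real_inner_comm ξ, mul_comm _ Complex.I]
  rw [hcharFun, hexponent, ← Complex.ofReal_exp]
  exact Complex.zero_le_real.2 (Real.exp_pos _).le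

/-- for a real-valued characteristic exponent, exponential negative
moments are infinite.  (The integrand is `∞` at `x = 0`, matching
`e^{λ·|0|^{-κ}} = e^∞ = ∞`.) -/
theorem levy_exponential_negative_moment_infinite
    (d : ℕ) (hd : 1 ≤ d)
    (ℓ : EuclideanSpace ℝ (Fin d))
    (Q : EuclideanSpace ℝ (Fin d) →ₗ[ℝ] EuclideanSpace ℝ (Fin d))
    (hQsymm : ∀ ξ η, (inner ℝ (Q ξ) η : ℝ) = (inner ℝ ξ (Q η) : ℝ))
    (hQpos : ∀ ξ, 0 ≤ (inner ℝ ξ (Q ξ) : ℝ))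
    (ν : Measure (EuclideanSpace ℝ (Fin d)))
    (hν0 : ν {0} = 0)
    (hν : ∫⁻ y, ENNReal.ofReal (min 1 (‖y‖ ^ 2)) ∂ν < ⊤)
    (ψ : EuclideanSpace ℝ (Fin d) → ℂ)
    (hψ : ∀ ξ, ψ ξ = -Complex.I * ((inner ℝ ℓ ξ : ℝ) : ℂ)
        + (((1 / 2 : ℝ) * (inner ℝ ξ (Q ξ) : ℝ) : ℝ) : ℂ)
        + ∫ y, ((1 : ℂ) - Complex.exp (Complex.I * ((inner ℝ ξ y : ℝ) : ℂ))
            + Complex.I * ((Set.indicator {y : EuclideanSpace ℝ (Fin d) | y ≠ 0 ∧ ‖y‖ < 1}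
                (fun y => (inner ℝ ξ y : ℝ)) y : ℝ) : ℂ)) ∂ν)
    (μ : ℝ → Measure (EuclideanSpace ℝ (Fin d)))
    (hμ : ∀ t > 0, IsProbabilityMeasure (μ t))
    (hchar : ∀ t > 0, ∀ ξ, ∫ x, Complex.exp (Complex.I * ((inner ℝ ξ x : ℝ) : ℂ)) ∂(μ t)
        = Complex.exp (-(t : ℂ) * ψ ξ))
    (hreal : ∀ ξ, (ψ ξ).im = 0) :
    ∀ l : ℝ, 0 < l → ∀ t : ℝ, 0 < t → ∀ κ : ℝ, 0 < κ →
      ∫⁻ x, (if x = 0 then (⊤ : ℝ≥0∞)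
        else ENNReal.ofReal (Real.exp (l * ‖x‖ ^ (-κ)))) ∂(μ t) = ⊤ :=
  levy_exponential_negative_moment_infinite_general d ψ μ hμ hchar hreal
end

section
/- Let σ ∈ (0,1] and κ ∈ (0,σ), and suppose limsup_{u↓0} φ(u)/u^σ < ∞ (equivalently, there is C_σ > 0 with φ(u) ≤ C_σ u^σ for 0 < u ≤ 1). Then there exists a constant C (depending on κ, σ and C_σ) such that E S_t^κ = ∫ s^κ μ_t(ds) ≤ C·(max(t,1))^{κ/σ} for all t > 0. If moreover limsup_{u→∞} φ(u)/u^σ < ∞, then E S_t^κ ≤ C·t^{κ/σ} for all t > 0. -/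
open MeasureTheory Set
open scoped ENNReal

/-!
For `a ≥ 1/u` we have `1 - exp (-u a) ≥ 1 - e⁻¹ > 1/2`, so Markov's inequality applied to
`1 - exp (-u S_t)` gives `P(S_t ≥ 1/u) ≤ 2 (1 - exp (-t φ(u))) ≤ 2 t φ(u)`. With `T ≥ t` and
`A = T^(1/σ)`, the bound `φ(u) ≤ C u^σ` for `u ≤ 1/A` thus yields `P(S_t ≥ s) ≤ 2 C (A/s)^σ` for
`s ≥ A` (take `T = max t 1` when the bound on `φ` is only known on `(0, 1]`, and `T = t` otherwise).
Splitting the layer-cake formula `E S^κ = κ ∫₀^∞ s^(κ-1) P(S ≥ s) ds` at `A` gives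
`E S_t^κ ≤ (1 + 2 κ C / (σ - κ)) A^κ`, the tail integral converging because `κ < σ`.
-/

lemma ae_nonneg_of_measure_Iio_eq_zero {μ : Measure ℝ} (h : μ (Iio 0) = 0) :
    ∀ᵐ a ∂μ, 0 ≤ a :=
  (measure_eq_zero_iff_ae_notMem.1 h).mono fun _ ha ↦ not_lt.1 ha

lemma measure_ge_inv_le_two_mul_one_sub_integral_exp (μ : Measure ℝ) [IsProbabilityMeasure μ]
    (hμ : ∀ᵐ a ∂μ, 0 ≤ a) {u : ℝ} (hu : 0 < u) :
    μ {a | u⁻¹ ≤ a} ≤ ENNReal.ofReal (2 * (1 - ∫ a, Real.exp (-u * a) ∂μ)) := by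
  have hexp_le_one : ∀ᵐ a ∂μ, Real.exp (-u * a) ≤ 1 := by
    filter_upwards [hμ] with a ha
    rw [Real.exp_le_one_iff]
    nlinarith
  have hexp_int : Integrable (fun a ↦ Real.exp (-u * a)) μ :=
    Integrable.of_bound (by fun_prop) 1 <| hexp_le_one.mono fun a ha ↦ by
      rwa [Real.norm_eq_abs, abs_of_pos (Real.exp_pos _)]
  set f : ℝ → ℝ := fun a ↦ 1 - Real.exp (-u * a)
  have hf_integral : ∫ a, f a ∂μ = 1 - ∫ a, Real.exp (-u * a) ∂μ := by
    simp only [f]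
    rw [integral_sub (integrable_const 1) hexp_int, integral_const, probReal_univ, one_smul]
  set ε := ENNReal.ofReal (1 - Real.exp (-1))
  have hsub : {a | u⁻¹ ≤ a} ⊆ {a | ε ≤ ENNReal.ofReal (f a)} := fun a ha ↦ by
    refine ENNReal.ofReal_le_ofReal (sub_le_sub_left (Real.exp_le_exp.2 ?_) 1)
    have := (inv_le_iff_one_le_mul₀' hu).1 ha
    linarith
  have hf_int : Integrable f μ := (integrable_const 1).sub hexp_int
  have markov := mul_meas_ge_le_lintegral₀ (μ := μ)
    (by fun_prop : Measurable fun a ↦ ENNReal.ofReal (f a)).aemeasurable ε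
  rw [← ofReal_integral_eq_lintegral_ofReal hf_int (hexp_le_one.mono fun a ha ↦ sub_nonneg.2 ha),
    hf_integral] at markov
  calc μ {a | u⁻¹ ≤ a} ≤ 2 * ε * μ {a | u⁻¹ ≤ a} := by
        refine le_mul_of_one_le_left' ?_
        rw [← ENNReal.ofReal_ofNat, ← ENNReal.ofReal_mul zero_le_two, ← ENNReal.ofReal_one]
        exact ENNReal.ofReal_le_ofReal (by linarith [Real.exp_neg_one_lt_half])
    _ ≤ 2 * (ε * μ {a | ε ≤ ENNReal.ofReal (f a)}) := by
        rw [mul_assoc]; gcongr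
    _ ≤ ENNReal.ofReal (2 * (1 - ∫ a, Real.exp (-u * a) ∂μ)) := by
        rw [ENNReal.ofReal_mul zero_le_two, ENNReal.ofReal_ofNat]; gcongr

lemma lintegral_Ioc_zero_rpow_sub_one {κ : ℝ} (hκ : 0 < κ) {A : ℝ} (hA : 0 ≤ A) :
    ∫⁻ t in Ioc 0 A, ENNReal.ofReal (t ^ (κ - 1)) = ENNReal.ofReal (A ^ κ / κ) := by
  rw [← ofReal_integral_eq_lintegral_ofReal
    (intervalIntegral.intervalIntegrable_rpow' (by linarith)).1
    ((ae_restrict_mem measurableSet_Ioc).mono fun t ht ↦ Real.rpow_nonneg ht.1.le _),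
    ← intervalIntegral.integral_of_le hA, integral_rpow (Or.inl (by linarith)), sub_add_cancel,
    Real.zero_rpow hκ.ne', sub_zero]

lemma lintegral_Ioi_rpow_of_lt {a : ℝ} (ha : a < -1) {c : ℝ} (hc : 0 < c) :
    ∫⁻ t in Ioi c, ENNReal.ofReal (t ^ a) = ENNReal.ofReal (-c ^ (a + 1) / (a + 1)) := by
  rw [← ofReal_integral_eq_lintegral_ofReal (integrableOn_Ioi_rpow_of_lt ha hc)
    ((ae_restrict_mem measurableSet_Ioi).mono fun t ht ↦ Real.rpow_nonneg (hc.trans ht).le _),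
    integral_Ioi_rpow_of_lt ha hc]

lemma lintegral_rpow_le_of_measure_ge_le (μ : Measure ℝ) [IsProbabilityMeasure μ]
    (hμ : ∀ᵐ a ∂μ, 0 ≤ a) {κ σ A M : ℝ} (hκ : 0 < κ) (hκσ : κ < σ) (hA : 0 < A) (hM : 0 ≤ M)
    (htail : ∀ s, A ≤ s → μ {a | s ≤ a} ≤ ENNReal.ofReal (M * (A / s) ^ σ)) :
    ∫⁻ a, ENNReal.ofReal (a ^ κ) ∂μ ≤ ENNReal.ofReal ((1 + κ * M / (σ - κ)) * A ^ κ) := by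
  rw [lintegral_rpow_eq_lintegral_meas_le_mul μ hμ aemeasurable_id hκ,
    ← Ioc_union_Ioi_eq_Ioi hA.le, lintegral_union measurableSet_Ioi (Ioc_disjoint_Ioi le_rfl)]
  have hbody : ∫⁻ s in Ioc 0 A, μ {a | s ≤ a} * ENNReal.ofReal (s ^ (κ - 1))
      ≤ ENNReal.ofReal (A ^ κ / κ) := by
    rw [← lintegral_Ioc_zero_rpow_sub_one hκ hA.le]
    exact lintegral_mono fun s ↦ mul_le_of_le_one_left' prob_le_one
  have htail_int : ∫⁻ s in Ioi A, μ {a | s ≤ a} * ENNReal.ofReal (s ^ (κ - 1))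
      ≤ ENNReal.ofReal (M * A ^ σ) * ENNReal.ofReal (A ^ (κ - σ) / (σ - κ)) := by
    have hpow := lintegral_Ioi_rpow_of_lt (a := κ - σ - 1) (by linarith) hA
    rw [sub_add_cancel, neg_div, ← div_neg, neg_sub] at hpow
    rw [← hpow, ← lintegral_const_mul' _ _ ENNReal.ofReal_ne_top]
    refine setLIntegral_mono' measurableSet_Ioi fun s hs ↦ ?_
    have hs0 : 0 < s := hA.trans hs
    calc μ {a | s ≤ a} * ENNReal.ofReal (s ^ (κ - 1))
        ≤ ENNReal.ofReal (M * (A / s) ^ σ) * ENNReal.ofReal (s ^ (κ - 1)) := by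
          gcongr; exact htail s (le_of_lt hs)
      _ = ENNReal.ofReal (M * A ^ σ) * ENNReal.ofReal (s ^ (κ - σ - 1)) := by
          rw [← ENNReal.ofReal_mul (by positivity), ← ENNReal.ofReal_mul (by positivity),
            Real.div_rpow hA.le hs0.le, show κ - σ - 1 = (κ - 1) - σ by ring,
            Real.rpow_sub hs0 (κ - 1) σ]
          ring_nf
  calc ENNReal.ofReal κ * ((∫⁻ s in Ioc 0 A, μ {a | s ≤ a} * ENNReal.ofReal (s ^ (κ - 1)))
        + ∫⁻ s in Ioi A, μ {a | s ≤ a} * ENNReal.ofReal (s ^ (κ - 1)))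
      ≤ ENNReal.ofReal κ * (ENNReal.ofReal (A ^ κ / κ)
        + ENNReal.ofReal (M * A ^ σ) * ENNReal.ofReal (A ^ (κ - σ) / (σ - κ))) := by
        gcongr
    _ = ENNReal.ofReal ((1 + κ * M / (σ - κ)) * A ^ κ) := by
        have hσκ : 0 < σ - κ := sub_pos.2 hκσ
        rw [← ENNReal.ofReal_mul (by positivity), ← ENNReal.ofReal_add (by positivity)
          (mul_nonneg (by positivity) (div_nonneg (by positivity) hσκ.le)),
          ← ENNReal.ofReal_mul hκ.le]
        congr 1
        rw [Real.rpow_sub hA]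
        field_simp

lemma lintegral_rpow_le_of_laplace_exponent_le (μ : Measure ℝ) [IsProbabilityMeasure μ]
    (hμ : ∀ᵐ a ∂μ, 0 ≤ a) {ψ : ℝ → ℝ}
    (hlap : ∀ u > 0, ∫ a, Real.exp (-u * a) ∂μ = Real.exp (-ψ u))
    {κ σ K T : ℝ} (hκ : 0 < κ) (hκσ : κ < σ) (hK : 0 ≤ K) (hT : 0 < T)
    (hψ : ∀ u, 0 < u → T * u ^ σ ≤ 1 → ψ u ≤ K * T * u ^ σ) :
    ∫⁻ a, ENNReal.ofReal (a ^ κ) ∂μ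
      ≤ ENNReal.ofReal ((1 + κ * (2 * K) / (σ - κ)) * T ^ (κ / σ)) := by
  have hσ : σ ≠ 0 := (hκ.trans hκσ).ne'
  set A := T ^ σ⁻¹
  have hA : 0 < A := Real.rpow_pos_of_pos hT _
  have hAσ : A ^ σ = T := by rw [← Real.rpow_mul hT.le, inv_mul_cancel₀ hσ, Real.rpow_one]
  have hAκ : A ^ κ = T ^ (κ / σ) := by rw [← Real.rpow_mul hT.le, inv_mul_eq_div]
  rw [← hAκ]
  refine lintegral_rpow_le_of_measure_ge_le μ hμ hκ hκσ hA (by positivity) fun s hs ↦ ?_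
  have hs0 : 0 < s := hA.trans_le hs
  have hu : 0 < s⁻¹ := inv_pos.2 hs0
  have hscale : T * s⁻¹ ^ σ = (A / s) ^ σ := by
    rw [Real.div_rpow hA.le hs0.le, hAσ, Real.inv_rpow hs0.le, div_eq_mul_inv]
  have hψs := hψ s⁻¹ hu <| hscale ▸ Real.rpow_le_one (by positivity)
    ((div_le_one hs0).2 hs) (hκ.trans hκσ).le
  calc μ {a | s ≤ a} = μ {a | s⁻¹⁻¹ ≤ a} := by rw [inv_inv]
    _ ≤ ENNReal.ofReal (2 * (1 - Real.exp (-ψ s⁻¹))) := by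
      rw [← hlap _ hu]; exact measure_ge_inv_le_two_mul_one_sub_integral_exp μ hμ hu
    _ ≤ ENNReal.ofReal (2 * K * (A / s) ^ σ) := by
      refine ENNReal.ofReal_le_ofReal ?_
      have := Real.add_one_le_exp (-ψ s⁻¹)
      rw [mul_assoc, ← hscale]
      linarith

theorem subordinator_positive_moment_estimate_general
    (φ : ℝ → ℝ)
    (μ : ℝ → Measure ℝ)
    (hμprob : ∀ t > 0, IsProbabilityMeasure (μ t))
    (hμsupp : ∀ t > 0, μ t (Set.Iio 0) = 0)
    (hlaplace : ∀ t > 0, ∀ u > 0, ∫ s, Real.exp (-u * s) ∂(μ t) = Real.exp (-t * φ u))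
    (σ κ Cσ : ℝ) (hκ0 : 0 < κ) (hκσ : κ < σ)
    (hCσ : 0 < Cσ)
    (hup : ∀ u : ℝ, 0 < u → u ≤ 1 → φ u ≤ Cσ * u ^ σ) :
    (∃ C > 0, ∀ t > 0,
      ∫⁻ s, ENNReal.ofReal (s ^ κ) ∂(μ t) ≤ ENNReal.ofReal (C * (max t 1) ^ (κ / σ)))
    ∧ ((∃ Cσ' : ℝ, ∀ u ≥ 1, φ u ≤ Cσ' * u ^ σ) →
      ∃ C > 0, ∀ t > 0,
        ∫⁻ s, ENNReal.ofReal (s ^ κ) ∂(μ t) ≤ ENNReal.ofReal (C * t ^ (κ / σ))) := by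
  have hσκ : 0 < σ - κ := sub_pos.2 hκσ
  have moment_le {t K T : ℝ} (ht : 0 < t) (hK : 0 ≤ K) (hT : 0 < T)
      (hφ : ∀ u, 0 < u → T * u ^ σ ≤ 1 → φ u ≤ K * u ^ σ) (htT : t ≤ T) :
      ∫⁻ s, ENNReal.ofReal (s ^ κ) ∂(μ t)
        ≤ ENNReal.ofReal ((1 + κ * (2 * K) / (σ - κ)) * T ^ (κ / σ)) := by
    have := hμprob t ht
    refine lintegral_rpow_le_of_laplace_exponent_le (μ t)
      (ae_nonneg_of_measure_Iio_eq_zero (hμsupp t ht)) (ψ := fun u ↦ t * φ u)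
      (fun u hu ↦ by rw [hlaplace t ht u hu, neg_mul]) hκ0 hκσ hK hT fun u hu hTu ↦ ?_
    calc t * φ u ≤ t * (K * u ^ σ) := mul_le_mul_of_nonneg_left (hφ u hu hTu) ht.le
      _ ≤ T * (K * u ^ σ) := mul_le_mul_of_nonneg_right htT (by positivity)
      _ = K * T * u ^ σ := by ring
  refine ⟨⟨_, by positivity, fun t ht ↦ moment_le ht hCσ.le (by positivity)
    (fun u hu hTu ↦ hup u hu ?_) (le_max_left t 1)⟩, ?_⟩
  · by_contra! hu1
    have := Real.one_lt_rpow hu1 (hκ0.trans hκσ)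
    nlinarith [le_max_right t 1]
  rintro ⟨Cσ', hCσ'⟩
  refine ⟨_, by positivity, fun t ht ↦ moment_le (K := max Cσ' Cσ) ht (by positivity) ht
    (fun u hu _ ↦ ?_) le_rfl⟩
  rcases le_or_gt u 1 with hu1 | hu1
  · exact (hup u hu hu1).trans (by gcongr; exact le_max_right _ _)
  · exact (hCσ' u hu1.le).trans (by gcongr; exact le_max_left _ _)

/-- positive moment estimates for a subordinator whose Bernstein
function satisfies φ(u) ≤ C_σ u^σ near 0. -/
theorem subordinator_positive_moment_estimate
    (b : ℝ) (hb : 0 ≤ b)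
    (ν : Measure ℝ) (hνsupp : ν (Set.Iic 0) = 0)
    (hνint : ∫⁻ x, ENNReal.ofReal (min x 1) ∂ν < ⊤)
    (φ : ℝ → ℝ)
    (hφ : ∀ u > 0, φ u = b * u + ∫ x, (1 - Real.exp (-u * x)) ∂ν)
    (μ : ℝ → Measure ℝ)
    (hμprob : ∀ t > 0, IsProbabilityMeasure (μ t))
    (hμsupp : ∀ t > 0, μ t (Set.Iio 0) = 0)
    (hlaplace : ∀ t > 0, ∀ u > 0, ∫ s, Real.exp (-u * s) ∂(μ t) = Real.exp (-t * φ u))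
    (σ κ Cσ : ℝ) (hσ0 : 0 < σ) (hσ1 : σ ≤ 1) (hκ0 : 0 < κ) (hκσ : κ < σ)
    (hCσ : 0 < Cσ)
    (hup : ∀ u : ℝ, 0 < u → u ≤ 1 → φ u ≤ Cσ * u ^ σ) :
    (∃ C > 0, ∀ t > 0,
      ∫⁻ s, ENNReal.ofReal (s ^ κ) ∂(μ t) ≤ ENNReal.ofReal (C * (max t 1) ^ (κ / σ)))
    ∧ ((∃ Cσ' : ℝ, ∀ u ≥ 1, φ u ≤ Cσ' * u ^ σ) →
      ∃ C > 0, ∀ t > 0,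
        ∫⁻ s, ENNReal.ofReal (s ^ κ) ∂(μ t) ≤ ENNReal.ofReal (C * t ^ (κ / σ))) :=
  subordinator_positive_moment_estimate_general φ μ hμprob hμsupp hlaplace σ κ Cσ hκ0 hκσ hCσ hup
end

section
/- Let κ > 0 and ρ ∈ (0,1], and suppose there exist constants C₁ > 0 and C₂ ≥ 0 with φ(u) ≥ C₁ u^ρ for all u ≥ C₂. Then for all t > 0: E S_t^{-κ} = ∫ s^{-κ} μ_t(ds) ≤ C₂^κ/(κ·Γ(κ)) + Γ(κ/ρ)/(ρ·Γ(κ)·(t·C₁)^{κ/ρ}); in particular there is a constant C with E S_t^{-κ} ≤ C·(min(t,1))^{-κ/ρ} for all t > 0. If moreover φ(u) ≥ C₁ u^ρ holds for all u > 0 (i.e. C₂ = 0), then E S_t^{-κ} ≤ Γ(κ/ρ)/(ρ·Γ(κ)·C₁^{κ/ρ}) · t^{-κ/ρ} for all t > 0. -/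
/-!
Integrating Euler's formula `s^{-κ} = Γ(κ)⁻¹ ∫₀^∞ u^{κ-1} e^{-us} du` against `μ_t` (Tonelli) gives
`E S_t^{-κ} = Γ(κ)⁻¹ ∫₀^∞ u^{κ-1} E e^{-u S_t} du`. The Laplace transform is at most `1` on
`(0, C₂]` and at most `e^{-t C₁ u^ρ}` beyond, and
`∫₀^∞ u^{κ-1} e^{-a u^ρ} du = Γ(κ/ρ) / (ρ a^{κ/ρ})`.
The same decay of the Laplace transform rules out an atom of `μ_t` at `0`, where `s^{-κ} = ∞`.
-/

open MeasureTheory Filter Set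
open scoped ENNReal Topology

noncomputable def laplaceTransform (μ : Measure ℝ) (u : ℝ) : ℝ≥0∞ :=
  ∫⁻ s, ENNReal.ofReal (Real.exp (-u * s)) ∂μ

theorem laplaceTransform_eq_ofReal_exp {μ : Measure ℝ} {u x : ℝ}
    (h : ∫ s, Real.exp (-u * s) ∂μ = Real.exp x) :
    laplaceTransform μ u = ENNReal.ofReal (Real.exp x) := by
  have hint : Integrable (fun s => Real.exp (-u * s)) μ :=
    Integrable.of_integral_ne_zero (h ▸ (Real.exp_pos x).ne')
  rw [laplaceTransform, ← h,
    ofReal_integral_eq_lintegral_ofReal hint (ae_of_all _ fun _ => (Real.exp_pos _).le)]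

theorem laplaceTransform_le_one {μ : Measure ℝ} [IsProbabilityMeasure μ]
    (hμ : μ (Iio 0) = 0) {u : ℝ} (hu : 0 ≤ u) : laplaceTransform μ u ≤ 1 := by
  have hnonneg : ∀ᵐ s ∂μ, 0 ≤ s := by
    rw [ae_iff]; simp only [not_le]; exact hμ
  calc laplaceTransform μ u ≤ ∫⁻ _, 1 ∂μ := by
        refine lintegral_mono_ae (hnonneg.mono fun s hs => ?_)
        rw [ENNReal.ofReal_le_one, Real.exp_le_one_iff]
        nlinarith
    _ = 1 := by rw [lintegral_one, measure_univ]

theorem measure_singleton_zero_le_laplaceTransform (μ : Measure ℝ) (u : ℝ) :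
    μ {0} ≤ laplaceTransform μ u := by
  calc μ {0} = ∫⁻ s in {0}, ENNReal.ofReal (Real.exp (-u * s)) ∂μ := by simp
    _ ≤ laplaceTransform μ u := setLIntegral_le_lintegral _ _

theorem measure_singleton_zero_eq_zero_of_laplaceTransform_le {μ : Measure ℝ} {a ρ D : ℝ}
    (ha : 0 < a) (hρ : 0 < ρ)
    (hdecay : ∀ u > D, laplaceTransform μ u ≤ ENNReal.ofReal (Real.exp (-a * u ^ ρ))) :
    μ {0} = 0 := by
  have hbound : Tendsto (fun u : ℝ => ENNReal.ofReal (Real.exp (-a * u ^ ρ))) atTop (𝓝 0) := by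
    have hexp : Tendsto (fun u : ℝ => Real.exp (-a * u ^ ρ)) atTop (𝓝 0) :=
      Real.tendsto_exp_atBot.comp <| by
        simpa only [neg_mul] using
          tendsto_neg_atBot_iff.2 ((tendsto_rpow_atTop hρ).const_mul_atTop ha)
    simpa using ENNReal.tendsto_ofReal hexp
  have hlim : Tendsto (laplaceTransform μ) atTop (𝓝 0) :=
    tendsto_of_tendsto_of_tendsto_of_le_of_le' tendsto_const_nhds hbound
      (Eventually.of_forall fun _ => zero_le) ((eventually_gt_atTop D).mono hdecay)
  exact nonpos_iff_eq_zero.1 (ge_of_tendsto' hlim (measure_singleton_zero_le_laplaceTransform μ))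

theorem lintegral_rpow_mul_exp_neg_mul_rpow {p q b : ℝ} (hp : 0 < p) (hq : -1 < q)
    (hb : 0 < b) :
    ∫⁻ x in Ioi 0, ENNReal.ofReal (x ^ q * Real.exp (-b * x ^ p)) =
      ENNReal.ofReal (b ^ (-(q + 1) / p) * (1 / p) * Real.Gamma ((q + 1) / p)) := by
  rw [← integral_rpow_mul_exp_neg_mul_rpow hp hq hb, ofReal_integral_eq_lintegral_ofReal
    (integrableOn_rpow_mul_exp_neg_mul_rpow hq hp hb)]
  filter_upwards [self_mem_ae_restrict measurableSet_Ioi] with x hx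
  exact mul_nonneg (Real.rpow_nonneg (le_of_lt hx) _) (Real.exp_pos _).le

theorem ofReal_rpow_neg_eq_lintegral {s κ : ℝ} (hs : 0 < s) (hκ : 0 < κ) :
    ENNReal.ofReal s ^ (-κ) = (ENNReal.ofReal (Real.Gamma κ))⁻¹ *
      ∫⁻ u in Ioi 0, ENNReal.ofReal (u ^ (κ - 1)) * ENNReal.ofReal (Real.exp (-u * s)) := by
  have hΓ : ENNReal.ofReal (Real.Gamma κ) ≠ 0 := by
    simpa using Real.Gamma_pos_of_pos hκ
  have hGamma := lintegral_rpow_mul_exp_neg_mul_rpow one_pos (by linarith : -1 < κ - 1) hs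
  simp only [Real.rpow_one, sub_add_cancel, div_one, mul_one] at hGamma
  have hEuler : ∫⁻ u in Ioi 0, ENNReal.ofReal (u ^ (κ - 1)) * ENNReal.ofReal (Real.exp (-u * s)) =
      ENNReal.ofReal (s ^ (-κ) * Real.Gamma κ) := by
    rw [← hGamma]
    refine setLIntegral_congr_fun measurableSet_Ioi fun u hu => ?_
    rw [← ENNReal.ofReal_mul (Real.rpow_nonneg (le_of_lt hu) _), neg_mul_comm, mul_comm u]
  rw [hEuler, ENNReal.ofReal_mul (Real.rpow_nonneg hs.le _), ENNReal.ofReal_rpow_of_pos hs,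
    mul_comm, ENNReal.mul_inv_cancel_right hΓ ENNReal.ofReal_ne_top]

theorem lintegral_ofReal_rpow_neg_eq {μ : Measure ℝ} [SFinite μ] (hμ : μ (Iic 0) = 0) {κ : ℝ}
    (hκ : 0 < κ) :
    ∫⁻ s, ENNReal.ofReal s ^ (-κ) ∂μ = (ENNReal.ofReal (Real.Gamma κ))⁻¹ *
      ∫⁻ u in Ioi 0, ENNReal.ofReal (u ^ (κ - 1)) * laplaceTransform μ u := by
  have hpos : ∀ᵐ s ∂μ, 0 < s := by
    rw [ae_iff]; simp only [not_lt]; exact hμ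
  have hΓ : ENNReal.ofReal (Real.Gamma κ) ≠ 0 := by
    simpa using Real.Gamma_pos_of_pos hκ
  calc ∫⁻ s, ENNReal.ofReal s ^ (-κ) ∂μ
      = ∫⁻ s, (ENNReal.ofReal (Real.Gamma κ))⁻¹ * (∫⁻ u in Ioi 0,
          ENNReal.ofReal (u ^ (κ - 1)) * ENNReal.ofReal (Real.exp (-u * s))) ∂μ :=
        lintegral_congr_ae (hpos.mono fun s hs => ofReal_rpow_neg_eq_lintegral hs hκ)
    _ = (ENNReal.ofReal (Real.Gamma κ))⁻¹ * ∫⁻ u in Ioi 0, ∫⁻ s,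
          ENNReal.ofReal (u ^ (κ - 1)) * ENNReal.ofReal (Real.exp (-u * s)) ∂μ := by
        rw [lintegral_const_mul' _ _ (ENNReal.inv_ne_top.2 hΓ),
          lintegral_lintegral_swap (by fun_prop)]
    _ = _ := by
        simp_rw [lintegral_const_mul' _ _ ENNReal.ofReal_ne_top, laplaceTransform]

theorem lintegral_Ioc_ofReal_rpow_sub_one {κ D : ℝ} (hκ : 0 < κ) (hD : 0 ≤ D) :
    ∫⁻ u in Ioc 0 D, ENNReal.ofReal (u ^ (κ - 1)) = ENNReal.ofReal (D ^ κ / κ) := by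
  have hint : IntegrableOn (fun u : ℝ => u ^ (κ - 1)) (Ioc 0 D) := by
    have h := intervalIntegral.intervalIntegrable_rpow' (a := 0) (b := D)
      (by linarith : (-1 : ℝ) < κ - 1)
    rwa [intervalIntegrable_iff, uIoc_of_le hD] at h
  rw [← ofReal_integral_eq_lintegral_ofReal hint, ← intervalIntegral.integral_of_le hD,
    integral_rpow (Or.inl (by linarith)), sub_add_cancel, Real.zero_rpow hκ.ne', sub_zero]
  filter_upwards [self_mem_ae_restrict measurableSet_Ioc] with u hu
  exact Real.rpow_nonneg hu.1.le _

theorem lintegral_ofReal_rpow_neg_le_of_laplaceTransform_le {μ : Measure ℝ}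
    [IsProbabilityMeasure μ] (hμ : μ (Iio 0) = 0) {κ ρ a D : ℝ} (hκ : 0 < κ) (hρ : 0 < ρ)
    (ha : 0 < a) (hD : 0 ≤ D)
    (hdecay : ∀ u > D, laplaceTransform μ u ≤ ENNReal.ofReal (Real.exp (-a * u ^ ρ))) :
    ∫⁻ s, ENNReal.ofReal s ^ (-κ) ∂μ ≤ ENNReal.ofReal
      (D ^ κ / (κ * Real.Gamma κ) + Real.Gamma (κ / ρ) / (ρ * Real.Gamma κ * a ^ (κ / ρ))) := by
  have hIic : μ (Iic 0) = 0 := by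
    rw [← Iio_union_right,
      measure_union_null hμ (measure_singleton_zero_eq_zero_of_laplaceTransform_le ha hρ hdecay)]
  set g : ℝ → ℝ≥0∞ := fun u => ENNReal.ofReal (u ^ (κ - 1)) * laplaceTransform μ u
  have hsmall : ∫⁻ u in Ioc 0 D, g u ≤ ENNReal.ofReal (D ^ κ / κ) :=
    (setLIntegral_mono' measurableSet_Ioc fun u hu =>
      mul_le_of_le_one_right' (laplaceTransform_le_one hμ hu.1.le)).trans_eq
      (lintegral_Ioc_ofReal_rpow_sub_one hκ hD)
  have hlarge : ∫⁻ u in Ioi D, g u ≤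
      ENNReal.ofReal (a ^ (-κ / ρ) * (1 / ρ) * Real.Gamma (κ / ρ)) := by
    have hGamma := lintegral_rpow_mul_exp_neg_mul_rpow hρ (by linarith : -1 < κ - 1) ha
    rw [sub_add_cancel] at hGamma
    calc ∫⁻ u in Ioi D, g u
        ≤ ∫⁻ u in Ioi D, ENNReal.ofReal (u ^ (κ - 1) * Real.exp (-a * u ^ ρ)) :=
          setLIntegral_mono' measurableSet_Ioi fun u hu => by
            rw [ENNReal.ofReal_mul (Real.rpow_nonneg (hD.trans hu.le) _)]
            exact mul_le_mul_right (hdecay u hu) _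
      _ ≤ ∫⁻ u in Ioi 0, ENNReal.ofReal (u ^ (κ - 1) * Real.exp (-a * u ^ ρ)) :=
          lintegral_mono_set (Ioi_subset_Ioi hD)
      _ = _ := hGamma
  have hΓ := Real.Gamma_pos_of_pos hκ
  have hΓρ := Real.Gamma_pos_of_pos (div_pos hκ hρ)
  calc ∫⁻ s, ENNReal.ofReal s ^ (-κ) ∂μ
      = (ENNReal.ofReal (Real.Gamma κ))⁻¹ * ((∫⁻ u in Ioc 0 D, g u) + ∫⁻ u in Ioi D, g u) := by
        rw [lintegral_ofReal_rpow_neg_eq hIic hκ, ← lintegral_union measurableSet_Ioi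
          (Ioc_disjoint_Ioi le_rfl), Ioc_union_Ioi_eq_Ioi hD]
    _ ≤ (ENNReal.ofReal (Real.Gamma κ))⁻¹ * (ENNReal.ofReal (D ^ κ / κ) +
          ENNReal.ofReal (a ^ (-κ / ρ) * (1 / ρ) * Real.Gamma (κ / ρ))) := by
        gcongr
    _ = ENNReal.ofReal ((D ^ κ / κ + a ^ (-κ / ρ) * (1 / ρ) * Real.Gamma (κ / ρ)) /
          Real.Gamma κ) := by
        rw [ENNReal.ofReal_div_of_pos hΓ, ENNReal.div_eq_inv_mul,
          ENNReal.ofReal_add (by positivity) (by positivity)]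
    _ = _ := by
        rw [neg_div, Real.rpow_neg ha.le]
        field_simp

theorem lintegral_ofReal_rpow_neg_le_of_le_laplaceExponent {μ : Measure ℝ}
    [IsProbabilityMeasure μ] (hμ : μ (Iio 0) = 0) {φ : ℝ → ℝ} {t κ ρ C₁ D : ℝ} (ht : 0 < t)
    (hκ : 0 < κ) (hρ : 0 < ρ) (hC₁ : 0 < C₁) (hD : 0 ≤ D)
    (hlaplace : ∀ u > 0, ∫ s, Real.exp (-u * s) ∂μ = Real.exp (-t * φ u))
    (hlow : ∀ u > D, C₁ * u ^ ρ ≤ φ u) :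
    ∫⁻ s, ENNReal.ofReal s ^ (-κ) ∂μ ≤ ENNReal.ofReal (D ^ κ / (κ * Real.Gamma κ) +
      Real.Gamma (κ / ρ) / (ρ * Real.Gamma κ * (t * C₁) ^ (κ / ρ))) := by
  refine lintegral_ofReal_rpow_neg_le_of_laplaceTransform_le hμ hκ hρ (mul_pos ht hC₁) hD
    fun u hu => ?_
  rw [laplaceTransform_eq_ofReal_exp (hlaplace u (hD.trans_lt hu))]
  refine ENNReal.ofReal_le_ofReal (Real.exp_le_exp.2 ?_)
  nlinarith [mul_le_mul_of_nonneg_left (hlow u hu) ht.le]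

theorem div_mul_mul_rpow_eq_mul_rpow_neg (G r e : ℝ) {t c : ℝ} (ht : 0 < t) (hc : 0 < c) :
    G / (r * (t * c) ^ e) = G / (r * c ^ e) * t ^ (-e) := by
  rw [Real.mul_rpow ht.le hc.le, Real.rpow_neg ht.le]
  ring

theorem add_mul_rpow_neg_le_mul_min_rpow_neg {A B t e : ℝ} (hA : 0 ≤ A) (hB : 0 ≤ B)
    (ht : 0 < t) (he : 0 ≤ e) :
    A + B * t ^ (-e) ≤ (A + B) * min t 1 ^ (-e) := by
  have hm : 0 < min t 1 := lt_min ht one_pos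
  have hone : 1 ≤ min t 1 ^ (-e) :=
    Real.one_le_rpow_of_pos_of_le_one_of_nonpos hm (min_le_right _ _) (neg_nonpos.2 he)
  have ht' : t ^ (-e) ≤ min t 1 ^ (-e) :=
    Real.rpow_le_rpow_of_nonpos hm (min_le_left _ _) (neg_nonpos.2 he)
  nlinarith [mul_le_mul_of_nonneg_left ht' hB]

/-- `ENNReal.ofReal s ^ (-κ)` is `s^{-κ}` for `s > 0` and `∞` for `s ≤ 0`. -/
theorem subordinator_negative_moment_estimate_general
    (φ : ℝ → ℝ)
    (μ : ℝ → Measure ℝ)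
    (hμprob : ∀ t > 0, IsProbabilityMeasure (μ t))
    (hμsupp : ∀ t > 0, μ t (Set.Iio 0) = 0)
    (hlaplace : ∀ t > 0, ∀ u > 0, ∫ s, Real.exp (-u * s) ∂(μ t) = Real.exp (-t * φ u))
    (κ ρ C₁ C₂ : ℝ) (hκ : 0 < κ) (hρ0 : 0 < ρ)
    (hC₁ : 0 < C₁) (hC₂ : 0 ≤ C₂)
    (hlow : ∀ u ≥ C₂, C₁ * u ^ ρ ≤ φ u) :
    (∀ t > 0,
      ∫⁻ s, (ENNReal.ofReal s) ^ (-κ) ∂(μ t) ≤ ENNReal.ofReal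
        (C₂ ^ κ / (κ * Real.Gamma κ)
          + Real.Gamma (κ / ρ) / (ρ * Real.Gamma κ * (t * C₁) ^ (κ / ρ))))
    ∧ (∃ C > 0, ∀ t > 0,
      ∫⁻ s, (ENNReal.ofReal s) ^ (-κ) ∂(μ t) ≤
        ENNReal.ofReal (C * (min t 1) ^ (-(κ / ρ))))
    ∧ ((∀ u > 0, C₁ * u ^ ρ ≤ φ u) → ∀ t > 0,
      ∫⁻ s, (ENNReal.ofReal s) ^ (-κ) ∂(μ t) ≤ ENNReal.ofReal
        (Real.Gamma (κ / ρ) / (ρ * Real.Gamma κ * C₁ ^ (κ / ρ)) * t ^ (-(κ / ρ)))) := by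
  have hbound : ∀ D, 0 ≤ D → (∀ u > D, C₁ * u ^ ρ ≤ φ u) → ∀ t > 0,
      ∫⁻ s, ENNReal.ofReal s ^ (-κ) ∂(μ t) ≤ ENNReal.ofReal (D ^ κ / (κ * Real.Gamma κ) +
        Real.Gamma (κ / ρ) / (ρ * Real.Gamma κ * (t * C₁) ^ (κ / ρ))) := fun D hD hlowD t ht =>
    have := hμprob t ht
    lintegral_ofReal_rpow_neg_le_of_le_laplaceExponent (hμsupp t ht) ht hκ hρ0 hC₁ hD
      (hlaplace t ht) hlowD
  have hC₂bound := hbound C₂ hC₂ fun u hu => hlow u hu.le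
  have hΓ := Real.Gamma_pos_of_pos hκ
  have hΓρ := Real.Gamma_pos_of_pos (div_pos hκ hρ0)
  refine ⟨hC₂bound, ⟨C₂ ^ κ / (κ * Real.Gamma κ) +
      Real.Gamma (κ / ρ) / (ρ * Real.Gamma κ * C₁ ^ (κ / ρ)), by positivity, fun t ht => ?_⟩,
    fun hlow' t ht => (hbound 0 le_rfl hlow' t ht).trans_eq ?_⟩
  · refine (hC₂bound t ht).trans (ENNReal.ofReal_le_ofReal ?_)
    rw [div_mul_mul_rpow_eq_mul_rpow_neg _ _ _ ht hC₁]
    exact add_mul_rpow_neg_le_mul_min_rpow_neg (by positivity) (by positivity) ht (by positivity)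
  · rw [Real.zero_rpow hκ.ne', zero_div, zero_add, div_mul_mul_rpow_eq_mul_rpow_neg _ _ _ ht hC₁]

/-- negative moment estimates for a subordinator.  Here
`(ENNReal.ofReal s) ^ (-κ)` equals `s^{-κ}` for `s > 0` and `∞` for `s ≤ 0`. -/
theorem subordinator_negative_moment_estimate
    (b : ℝ) (hb : 0 ≤ b)
    (ν : Measure ℝ) (hνsupp : ν (Set.Iic 0) = 0)
    (hνint : ∫⁻ x, ENNReal.ofReal (min x 1) ∂ν < ⊤)
    (φ : ℝ → ℝ)
    (hφ : ∀ u > 0, φ u = b * u + ∫ x, (1 - Real.exp (-u * x)) ∂ν)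
    (μ : ℝ → Measure ℝ)
    (hμprob : ∀ t > 0, IsProbabilityMeasure (μ t))
    (hμsupp : ∀ t > 0, μ t (Set.Iio 0) = 0)
    (hlaplace : ∀ t > 0, ∀ u > 0, ∫ s, Real.exp (-u * s) ∂(μ t) = Real.exp (-t * φ u))
    (κ ρ C₁ C₂ : ℝ) (hκ : 0 < κ) (hρ0 : 0 < ρ) (hρ1 : ρ ≤ 1)
    (hC₁ : 0 < C₁) (hC₂ : 0 ≤ C₂)
    (hlow : ∀ u ≥ C₂, C₁ * u ^ ρ ≤ φ u) :
    (∀ t > 0,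
      ∫⁻ s, (ENNReal.ofReal s) ^ (-κ) ∂(μ t) ≤ ENNReal.ofReal
        (C₂ ^ κ / (κ * Real.Gamma κ)
          + Real.Gamma (κ / ρ) / (ρ * Real.Gamma κ * (t * C₁) ^ (κ / ρ))))
    ∧ (∃ C > 0, ∀ t > 0,
      ∫⁻ s, (ENNReal.ofReal s) ^ (-κ) ∂(μ t) ≤
        ENNReal.ofReal (C * (min t 1) ^ (-(κ / ρ))))
    ∧ ((∀ u > 0, C₁ * u ^ ρ ≤ φ u) → ∀ t > 0,
      ∫⁻ s, (ENNReal.ofReal s) ^ (-κ) ∂(μ t) ≤ ENNReal.ofReal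
        (Real.Gamma (κ / ρ) / (ρ * Real.Gamma κ * C₁ ^ (κ / ρ)) * t ^ (-(κ / ρ)))) :=
  subordinator_negative_moment_estimate_general φ μ hμprob hμsupp hlaplace κ ρ C₁ C₂ hκ hρ0 hC₁ hC₂
    hlow
end

section
/- Let κ > 0 and ρ ∈ (κ/(1+κ), 1], and suppose there exist constants C₁ > 0 and C₂ ≥ 0 with φ(u) ≥ C₁ u^ρ for all u ≥ C₂. Then there exists a constant C (depending only on κ, ρ, C₁, C₂) such that for all λ > 0 and t > 0: E e^{λ S_t^{-κ}} = ∫ e^{λ s^{-κ}} μ_t(ds) ≤ exp[ C·( λ + (λ/t^{κ/ρ})^{ρ/(ρ-(1-ρ)κ)} + λ/t^{κ/ρ} ) ]. In particular, for each fixed λ > 0 there is a constant C' with E e^{λ S_t^{-κ}} ≤ exp[ C'·(min(t,1))^{-κ/(ρ-(1-ρ)κ)} ] for all t > 0. If moreover φ(u) ≥ C₁ u^ρ holds for all u > 0 (C₂ = 0), then the term C·λ can be omitted: E e^{λ S_t^{-κ}} ≤ exp[ C·( (λ/t^{κ/ρ})^{ρ/(ρ-(1-ρ)κ)} + λ/t^{κ/ρ}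 ) ] for all λ, t > 0. -/
/-!
Chernoff's bound and the Laplace transform give `P(S_t ≤ x) ≤ exp (u x - t C₁ u^ρ)` for
`u ≥ C₂`. Optimizing over `u`, with `X = λ / t^{κ/ρ}` the tail of `λ S_t^{-κ}` is
`P(λ S_t^{-κ} > w) ≤ exp (-c (w / X)^γ)`, `γ = ρ / (κ (1 - ρ)) > 1`, as soon as `w` exceeds a
threshold of order `λ / t^κ` coming from the constraint `u ≥ C₂` (for `ρ = 1` the tail even
vanishes beyond `w ≈ X`). Young's inequality bounds this by `exp (S - n w)` with
`S ≲ (n X)^{γ/(γ-1)}` and `γ / (γ - 1) = ρ / (ρ - (1 - ρ) κ)`, and the layer-cake formula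
integrates the tail.
-/

open MeasureTheory Filter Set
open scoped ENNReal Classical

open Real ProbabilityTheory

lemma measure_Iic_le_exp_of_integral_exp_neg {m : Measure ℝ} [IsFiniteMeasure m] {u a : ℝ}
    (hu : 0 ≤ u) (hL : ∫ s, exp (-u * s) ∂m = exp a) (x : ℝ) :
    m (Iic x) ≤ ENNReal.ofReal (exp (u * x + a)) := by
  have hint : Integrable (fun s => exp (-u * s)) m :=
    .of_integral_ne_zero (by rw [hL]; exact (exp_pos a).ne')
  have h := measure_le_le_exp_mul_mgf (X := id) x (neg_nonpos.2 hu) hint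
  rw [mgf, Measure.real] at h
  simp only [id, neg_neg, hL, ← exp_add] at h
  rw [← ENNReal.ofReal_toReal (measure_ne_top m _)]
  exact ENNReal.ofReal_le_ofReal h

lemma eq_zero_of_le_ofReal_exp {ι : Type*} {l : Filter ι} [l.NeBot] {a : ℝ≥0∞} {F : ι → ℝ}
    (hF : Tendsto F l atBot) (h : ∀ᶠ i in l, a ≤ ENNReal.ofReal (exp (F i))) : a = 0 := by
  have hlim : Tendsto (fun i => ENNReal.ofReal (exp (F i))) l (nhds 0) := by
    simpa [Function.comp_def] using
      (ENNReal.continuous_ofReal.tendsto 0).comp (tendsto_exp_atBot.comp hF)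
  exact le_zero_iff.mp (ge_of_tendsto hlim h)

lemma setOf_lt_mul_rpow_neg_subset_Iic {κ l w : ℝ} (hκ : 0 < κ) (hl : 0 ≤ l) (hw : 0 < w) :
    {s : ℝ | w < l * s ^ (-κ)} ⊆ Iic ((l / w) ^ κ⁻¹) := by
  intro s (hs : w < l * s ^ (-κ))
  rcases le_or_gt s 0 with hs0 | hs0
  · exact hs0.trans (by positivity)
  · rw [mem_Iic, le_rpow_inv_iff_of_pos hs0.le (by positivity) hκ, le_div_iff₀ hw]
    rw [rpow_neg hs0.le, ← div_eq_mul_inv, lt_div_iff₀ (by positivity)] at hs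
    linarith [mul_comm w (s ^ κ)]

/-- Chernoff's bound for `S_t ∼ m` when `E e^{-u S_t} = e^{-t φ(u)}` and `φ(u) ≥ C₁ u^ρ`
for `u ≥ c₂`. -/
def SmallBallBound (m : Measure ℝ) (t C₁ ρ c₂ : ℝ) : Prop :=
  ∀ u, c₂ ≤ u → 0 < u → ∀ x, m (Iic x) ≤ ENNReal.ofReal (exp (u * x - t * (C₁ * u ^ ρ)))

namespace SmallBallBound

variable {m : Measure ℝ} {t C₁ ρ c₂ : ℝ}

lemma of_integral_exp_neg [IsFiniteMeasure m] {φ : ℝ → ℝ} (ht : 0 ≤ t)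
    (hL : ∀ u > 0, ∫ s, exp (-u * s) ∂m = exp (-t * φ u))
    (hφ : ∀ u, c₂ ≤ u → 0 < u → C₁ * u ^ ρ ≤ φ u) : SmallBallBound m t C₁ ρ c₂ := by
  intro u hc₂u hu x
  refine (measure_Iic_le_exp_of_integral_exp_neg hu.le (hL u hu) x).trans ?_
  gcongr
  nlinarith [hφ u hc₂u hu]

lemma eventually_le (h : SmallBallBound m t C₁ ρ c₂) (x : ℝ) :
    ∀ᶠ u in atTop, m (Iic x) ≤ ENNReal.ofReal (exp (u * x - t * (C₁ * u ^ ρ))) := by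
  filter_upwards [eventually_ge_atTop c₂, eventually_gt_atTop 0] with u hc₂u hu
  exact h u hc₂u hu x

lemma measure_Iic_zero (h : SmallBallBound m t C₁ ρ c₂) (hρ : 0 < ρ) (htC : 0 < t * C₁) :
    m (Iic 0) = 0 := by
  refine eq_zero_of_le_ofReal_exp ?_ (h.eventually_le 0)
  have := (tendsto_rpow_atTop hρ).const_mul_atTop htC
  refine tendsto_neg_atTop_atBot.comp this |>.congr fun u => ?_
  simp only [Function.comp_apply]; ring

lemma measure_Iic_eq_zero_of_lt (h : SmallBallBound m t C₁ 1 c₂) {x : ℝ} (hx : x < t * C₁) :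
    m (Iic x) = 0 := by
  refine eq_zero_of_le_ofReal_exp ?_ (h.eventually_le x)
  refine (tendsto_id.atTop_mul_const_of_neg (sub_neg.2 hx)).congr fun u => ?_
  simp only [id, rpow_one]; ring

/-- For `ρ < 1` the Chernoff bound is optimized at `u ^ (1 - ρ) = t C₁ / (2 x)`. -/
lemma measure_Iic_le_exp_neg_rpow (h : SmallBallBound m t C₁ ρ c₂) (hρ : ρ < 1)
    (htC : 0 < t * C₁) (hc₂ : 0 ≤ c₂) {x : ℝ} (hx : 0 < x) (hxc : 2 * x * c₂ ^ (1 - ρ) ≤ t * C₁) :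
    m (Iic x) ≤ ENNReal.ofReal (exp (-(t * C₁ / 2 * (t * C₁ / (2 * x)) ^ (ρ / (1 - ρ))))) := by
  set A := t * C₁ / (2 * x)
  have hA : 0 < A := by positivity
  have h1ρ : 0 < 1 - ρ := sub_pos.2 hρ
  have hc₂u : c₂ ≤ A ^ (1 - ρ)⁻¹ := by
    rw [le_rpow_inv_iff_of_pos hc₂ hA.le h1ρ, le_div_iff₀ (by positivity)]
    linarith
  have hu : A ^ (1 - ρ)⁻¹ = A * A ^ (ρ / (1 - ρ)) := by
    rw [show (1 - ρ)⁻¹ = 1 + ρ / (1 - ρ) by field_simp; ring, rpow_add hA, rpow_one]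
  have huρ : (A ^ (1 - ρ)⁻¹) ^ ρ = A ^ (ρ / (1 - ρ)) := by
    rw [← rpow_mul hA.le]; congr 1; field_simp
  refine (h _ hc₂u (by positivity) x).trans_eq ?_
  rw [huρ, hu]
  congr 2
  simp only [A]
  field_simp
  ring

lemma measure_lt_mul_rpow_neg_le (h : SmallBallBound m t C₁ ρ c₂) {κ l w : ℝ} (hκ : 0 < κ)
    (hρ0 : 0 < ρ) (hρ : ρ < 1) (ht : 0 < t) (hC₁ : 0 < C₁) (hc₂ : 0 ≤ c₂) (hl : 0 < l)
    (hw : 0 < w) (hwc : (2 * c₂ ^ (1 - ρ) / C₁) ^ κ * (l / t ^ κ) ≤ w) :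
    m {s | w < l * s ^ (-κ)} ≤ ENNReal.ofReal
      (exp (-((C₁ / 2) ^ (1 - ρ)⁻¹ * (w / (l / t ^ (κ / ρ))) ^ (ρ / (κ * (1 - ρ)))))) := by
  set x := (l / w) ^ κ⁻¹
  have hx : 0 < x := by positivity
  have hxκ : x ^ κ = l / w := by rw [← rpow_mul (by positivity), inv_mul_cancel₀ hκ.ne', rpow_one]
  have hxc : 2 * x * c₂ ^ (1 - ρ) ≤ t * C₁ := by
    have hb : 0 ≤ 2 * c₂ ^ (1 - ρ) / C₁ := by positivity
    have hκ_le : (2 * c₂ ^ (1 - ρ) / C₁ * x) ^ κ ≤ t ^ κ := by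
      rw [mul_rpow hb hx.le, hxκ, ← mul_div_assoc, div_le_iff₀ hw]
      rw [← mul_div_assoc, div_le_iff₀ (by positivity)] at hwc
      linarith [mul_comm w (t ^ κ)]
    have := (rpow_le_rpow_iff (by positivity) ht.le hκ).1 hκ_le
    rw [div_mul_eq_mul_div, div_le_iff₀ hC₁] at this
    linarith
  have hidentity : t * C₁ / 2 * (t * C₁ / (2 * x)) ^ (ρ / (1 - ρ)) =
      (C₁ / 2) ^ (1 - ρ)⁻¹ * (w / (l / t ^ (κ / ρ))) ^ (ρ / (κ * (1 - ρ))) := by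
    have h1ρ : 1 - ρ ≠ 0 := by linarith
    -- both sides are products of powers of positive reals: compare their logarithms
    rw [← exp_log (by positivity : 0 < t * C₁ / 2 * (t * C₁ / (2 * x)) ^ (ρ / (1 - ρ))),
      ← exp_log (by positivity :
        0 < (C₁ / 2) ^ (1 - ρ)⁻¹ * (w / (l / t ^ (κ / ρ))) ^ (ρ / (κ * (1 - ρ))))]
    congr 1
    simp (disch := positivity) only [x, log_mul, log_div, log_rpow]
    field_simp
    ring
  calc m {s | w < l * s ^ (-κ)} ≤ m (Iic x) :=
        measure_mono (setOf_lt_mul_rpow_neg_subset_Iic hκ hl.le hw)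
    _ ≤ _ := h.measure_Iic_le_exp_neg_rpow hρ (by positivity) hc₂ hx hxc
    _ = _ := by rw [hidentity]

end SmallBallBound

lemma mul_le_mul_rpow_add_mul_rpow {a c γ v : ℝ} (ha : 0 ≤ a) (hc : 0 < c) (hγ : 1 < γ)
    (hv : 0 ≤ v) : a * v ≤ a * (a / c) ^ (γ - 1)⁻¹ + c * v ^ γ := by
  set v₀ := (a / c) ^ (γ - 1)⁻¹
  have hv₀ : 0 ≤ v₀ := by positivity
  rcases le_or_gt v v₀ with hvv₀ | hvv₀
  · nlinarith [mul_le_mul_of_nonneg_left hvv₀ ha, rpow_nonneg hv γ]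
  · have hv₀γ : c * v₀ ^ (γ - 1) = a := by
      rw [← rpow_mul (by positivity), inv_mul_cancel₀ (by linarith), rpow_one]
      field_simp
    have hvγ : v ^ γ = v ^ (γ - 1) * v := by
      rw [← rpow_add_one (by linarith), sub_add_cancel]
    calc a * v = c * v₀ ^ (γ - 1) * v := by rw [hv₀γ]
      _ ≤ c * v ^ (γ - 1) * v := by gcongr
      _ ≤ a * v₀ + c * v ^ γ := by rw [hvγ]; nlinarith

lemma setLIntegral_Ioi_rpow_neg_le {E n : ℝ} (hE : 1 ≤ E) (hn : 1 < n) :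
    ∫⁻ y in Ioi E, ENNReal.ofReal (y ^ (-n)) ≤ ENNReal.ofReal (n - 1)⁻¹ := by
  have hE0 : 0 < E := by linarith
  rw [← ofReal_integral_eq_lintegral_ofReal (integrableOn_Ioi_rpow_of_lt (by linarith) hE0)]
  · rw [integral_Ioi_rpow_of_lt (by linarith) hE0]
    gcongr
    rw [show -n + 1 = -(n - 1) by ring, div_neg, neg_div, neg_neg, div_eq_mul_inv]
    exact mul_le_of_le_one_left (inv_nonneg.2 (by linarith))
      (rpow_le_one_of_one_le_of_nonpos hE (by linarith))
  · filter_upwards [ae_restrict_mem measurableSet_Ioi] with y (hy : E < y)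
    exact rpow_nonneg (hE0.trans hy).le _

lemma lintegral_ofReal_exp_le {α : Type*} [MeasurableSpace α] {m : Measure α}
    [IsProbabilityMeasure m] {g : α → ℝ} (hg : Measurable g) {W S n : ℝ} (hW : 0 ≤ W)
    (hn : 1 < n) (htail : ∀ w > W, m {a | w < g a} ≤ ENNReal.ofReal (exp (S - n * w))) :
    ∫⁻ a, ENNReal.ofReal (exp (g a)) ∂m ≤ ENNReal.ofReal (exp W + exp S * (n - 1)⁻¹) := by
  have hE : 1 ≤ exp W := one_le_exp hW
  rw [lintegral_eq_lintegral_meas_lt m (.of_forall fun a => (exp_pos _).le)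
      hg.exp.aemeasurable, ← Ioc_union_Ioi_eq_Ioi (exp_pos W).le,
    lintegral_union measurableSet_Ioi Ioc_disjoint_Ioi_same,
    ENNReal.ofReal_add (exp_pos W).le
      (mul_nonneg (exp_pos S).le (inv_nonneg.2 (by linarith)))]
  gcongr
  · calc ∫⁻ y in Ioc 0 (exp W), m {a | y < exp (g a)} ≤ ∫⁻ _ in Ioc 0 (exp W), 1 :=
          lintegral_mono fun y => prob_le_one
      _ = ENNReal.ofReal (exp W) := by simp
  · calc ∫⁻ y in Ioi (exp W), m {a | y < exp (g a)}
        ≤ ∫⁻ y in Ioi (exp W), ENNReal.ofReal (exp S) * ENNReal.ofReal (y ^ (-n)) := by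
          refine setLIntegral_mono (by fun_prop) fun y (hy : exp W < y) => ?_
          have hy0 : 0 < y := (exp_pos W).trans hy
          have hlog : W < log y := by rwa [lt_log_iff_exp_lt hy0]
          rw [← ENNReal.ofReal_mul (exp_pos S).le, rpow_def_of_pos hy0, ← exp_add]
          convert htail (log y) hlog using 3
          · ext a; exact (log_lt_iff_lt_exp hy0).symm
          · ring
      _ = ENNReal.ofReal (exp S) * ∫⁻ y in Ioi (exp W), ENNReal.ofReal (y ^ (-n)) :=
          lintegral_const_mul _ (by fun_prop)
      _ ≤ ENNReal.ofReal (exp S) * ENNReal.ofReal (n - 1)⁻¹ := by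
          gcongr; exact setLIntegral_Ioi_rpow_neg_le hE hn
      _ = ENNReal.ofReal (exp S * (n - 1)⁻¹) := (ENNReal.ofReal_mul (exp_pos S).le).symm

lemma mul_sub_mul_div_rpow_le {n X c γ w : ℝ} (hn : 0 ≤ n) (hX : 0 < X) (hc : 0 < c)
    (hγ : 1 < γ) (hw : 0 ≤ w) (hnX : n * X ≤ 2 * max X 1) :
    n * w - c * (w / X) ^ γ ≤ 2 * (2 / c) ^ (γ - 1)⁻¹ * (1 + X ^ (1 + (γ - 1)⁻¹)) := by
  have hyoung := mul_le_mul_rpow_add_mul_rpow (a := n * X) (v := w / X) (by positivity) hc hγ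
    (by positivity)
  rw [show n * X * (w / X) = n * w by field_simp] at hyoung
  set q := (γ - 1)⁻¹
  set M := max X 1
  have hM : 0 < M := lt_max_of_lt_right one_pos
  have hMq : M ^ (1 + q) ≤ 1 + X ^ (1 + q) := by
    rcases le_total X 1 with h | h
    · simp only [M, max_eq_right h, one_rpow]; linarith [rpow_nonneg hX.le (1 + q)]
    · simp only [M, max_eq_left h]; linarith
  have hq : 0 ≤ q := inv_nonneg.2 (by linarith)
  calc n * w - c * (w / X) ^ γ ≤ n * X * (n * X / c) ^ q := by linarith
    _ ≤ 2 * M * (2 * M / c) ^ q := by gcongr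
    _ = 2 * (2 / c) ^ q * M ^ (1 + q) := by
        rw [rpow_add hM, rpow_one, mul_div_right_comm, mul_rpow (by positivity) hM.le]; ring
    _ ≤ 2 * (2 / c) ^ q * (1 + X ^ (1 + q)) := by gcongr

lemma exp_add_exp_mul_le {W X S K B : ℝ} (hW : 0 ≤ W) (hX : 0 < X) (hK : 0 ≤ K) (hB : 0 ≤ B)
    (hS : S ≤ K * (1 + B)) :
    exp W + exp S * (max 1 X⁻¹)⁻¹ ≤ exp (W + K * B + exp K * X) := by
  have hmin : (max 1 X⁻¹)⁻¹ ≤ X := by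
    rw [inv_le_comm₀ (by positivity) hX]; exact le_max_right _ _
  have hS' : exp S * (max 1 X⁻¹)⁻¹ ≤ exp (K * B) * (exp K * X) :=
    calc exp S * (max 1 X⁻¹)⁻¹ ≤ exp (K * (1 + B)) * X := by gcongr
      _ = exp (K * B) * (exp K * X) := by rw [mul_one_add, exp_add]; ring
  have hW' : exp (K * B) * (exp K * X) ≤ exp W * exp (K * B) * (exp K * X) := by
    rw [mul_assoc]
    exact le_mul_of_one_le_left (by positivity) (one_le_exp hW)
  calc exp W + exp S * (max 1 X⁻¹)⁻¹ ≤ exp W * exp (K * B) * (1 + exp K * X) := by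
        nlinarith [le_mul_of_one_le_right (exp_pos W).le (one_le_exp (by positivity : 0 ≤ K * B))]
    _ ≤ exp W * exp (K * B) * exp (exp K * X) := by gcongr; linarith [add_one_le_exp (exp K * X)]
    _ = exp (W + K * B + exp K * X) := by rw [exp_add, exp_add]

lemma sub_one_sub_mul_pos {κ ρ : ℝ} (hκ : 0 < κ) (hρl : κ / (1 + κ) < ρ) :
    0 < ρ - (1 - ρ) * κ := by
  rw [div_lt_iff₀ (by linarith)] at hρl
  linarith

lemma one_add_inv_sub_one_eq {κ ρ : ℝ} (hκ : 0 < κ) (hρ : ρ < 1)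
    (hδ : 0 < ρ - (1 - ρ) * κ) :
    1 + (ρ / (κ * (1 - ρ)) - 1)⁻¹ = ρ / (ρ - (1 - ρ) * κ) := by
  have h1ρ : 1 - ρ ≠ 0 := by linarith
  rw [show ρ / (κ * (1 - ρ)) - 1 = (ρ - (1 - ρ) * κ) / (κ * (1 - ρ)) by field_simp,
    inv_div, one_add_div hδ.ne']
  congr 1
  ring

lemma exists_lintegral_exp_rpow_neg_le_of_lt_one {κ ρ C₁ : ℝ} (hκ : 0 < κ)
    (hρl : κ / (1 + κ) < ρ) (hρ : ρ < 1) (hC₁ : 0 < C₁) :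
    ∃ K > 0, ∀ (m : Measure ℝ) [IsProbabilityMeasure m] (t c₂ l : ℝ), 0 < t → 0 ≤ c₂ → 0 < l →
      SmallBallBound m t C₁ ρ c₂ →
      ∫⁻ s, ENNReal.ofReal (exp (l * s ^ (-κ))) ∂m ≤ ENNReal.ofReal (exp
        (K * (l / t ^ (κ / ρ) + (l / t ^ (κ / ρ)) ^ (ρ / (ρ - (1 - ρ) * κ)))
          + (2 * c₂ ^ (1 - ρ) / C₁) ^ κ * (l / t ^ κ))) := by
  have hρ0 : 0 < ρ := (div_pos hκ (by linarith)).trans hρl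
  have h1ρ : 0 < 1 - ρ := sub_pos.2 hρ
  have hδ := sub_one_sub_mul_pos hκ hρl
  set γ := ρ / (κ * (1 - ρ))
  have hγ : 1 < γ := by rw [lt_div_iff₀ (by positivity)]; linarith
  have hp := one_add_inv_sub_one_eq hκ hρ hδ
  set c := (C₁ / 2) ^ (1 - ρ)⁻¹
  set K₁ := 2 * (2 / c) ^ (γ - 1)⁻¹
  refine ⟨K₁ + exp K₁, by positivity, fun m _ t c₂ l ht hc₂ hl h => ?_⟩
  set X := l / t ^ (κ / ρ)
  have hX : 0 < X := by positivity
  set W := (2 * c₂ ^ (1 - ρ) / C₁) ^ κ * (l / t ^ κ)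
  -- `(n - 1)⁻¹ = min 1 X` keeps the tail integral `O(X)`, while still `n X ≤ 2 max X 1`.
  set n := 1 + max 1 X⁻¹
  have hnX : n * X ≤ 2 * max X 1 := by
    rw [add_mul, one_mul, max_mul_of_nonneg _ _ hX.le, one_mul, inv_mul_cancel₀ hX.ne']
    linarith [le_max_left X 1]
  set S := K₁ * (1 + X ^ (ρ / (ρ - (1 - ρ) * κ)))
  have htail : ∀ w > W, m {s | w < l * s ^ (-κ)} ≤ ENNReal.ofReal (exp (S - n * w)) := by
    intro w hw
    have hw0 : 0 < w := lt_of_le_of_lt (by positivity) hw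
    refine (h.measure_lt_mul_rpow_neg_le hκ hρ0 hρ ht hC₁ hc₂ hl hw0 hw.le).trans
      (ENNReal.ofReal_le_ofReal (exp_le_exp.2 ?_))
    have := mul_sub_mul_div_rpow_le (by positivity) hX (by positivity : 0 < c) hγ hw0.le hnX
    rw [hp] at this
    show -(c * (w / X) ^ γ) ≤ 2 * (2 / c) ^ (γ - 1)⁻¹ * (1 + X ^ (ρ / (ρ - (1 - ρ) * κ))) - n * w
    linarith
  calc ∫⁻ s, ENNReal.ofReal (exp (l * s ^ (-κ))) ∂m
      ≤ ENNReal.ofReal (exp W + exp S * (n - 1)⁻¹) :=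
        lintegral_ofReal_exp_le (by fun_prop) (by positivity) (by simp [n]) htail
    _ ≤ ENNReal.ofReal (exp (W + K₁ * X ^ (ρ / (ρ - (1 - ρ) * κ)) + exp K₁ * X)) := by
        rw [add_sub_cancel_left]
        exact ENNReal.ofReal_le_ofReal (exp_add_exp_mul_le (by positivity) hX (by positivity)
          (by positivity) le_rfl)
    _ ≤ _ := by
        refine ENNReal.ofReal_le_ofReal (exp_le_exp.2 ?_)
        have : 0 ≤ K₁ := by positivity
        nlinarith [rpow_nonneg hX.le (ρ / (ρ - (1 - ρ) * κ)), exp_pos K₁]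

lemma SmallBallBound.lintegral_exp_rpow_neg_le_of_one {m : Measure ℝ} [IsProbabilityMeasure m]
    {t C₁ c₂ κ l : ℝ} (h : SmallBallBound m t C₁ 1 c₂) (hκ : 0 < κ) (ht : 0 < t) (hC₁ : 0 < C₁)
    (hl : 0 < l) :
    ∫⁻ s, ENNReal.ofReal (exp (l * s ^ (-κ))) ∂m ≤
      ENNReal.ofReal (exp (C₁ ^ (-κ) * (l / t ^ κ) + l / t ^ κ)) := by
  set X := l / t ^ κ
  have hX : 0 < X := by positivity
  set n := 1 + max 1 X⁻¹
  have htail : ∀ w > C₁ ^ (-κ) * X,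
      m {s | w < l * s ^ (-κ)} ≤ ENNReal.ofReal (exp (0 - n * w)) := by
    intro w hw
    have hw0 : 0 < w := lt_of_le_of_lt (by positivity) hw
    refine (measure_mono_null (setOf_lt_mul_rpow_neg_subset_Iic hκ hl.le hw0)
      (h.measure_Iic_eq_zero_of_lt ?_)).trans_le zero_le
    rw [rpow_inv_lt_iff_of_pos (by positivity) (by positivity) hκ, div_lt_iff₀ hw0,
      mul_rpow ht.le hC₁.le]
    rw [rpow_neg hC₁.le, inv_mul_eq_div, div_div, gt_iff_lt, div_lt_iff₀ (by positivity)] at hw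
    linarith
  calc ∫⁻ s, ENNReal.ofReal (exp (l * s ^ (-κ))) ∂m
      ≤ ENNReal.ofReal (exp (C₁ ^ (-κ) * X) + exp 0 * (n - 1)⁻¹) :=
        lintegral_ofReal_exp_le (by fun_prop) (by positivity) (by simp [n]) htail
    _ ≤ ENNReal.ofReal (exp (C₁ ^ (-κ) * X + 0 * 0 + exp 0 * X)) := by
        rw [add_sub_cancel_left]
        exact ENNReal.ofReal_le_ofReal (exp_add_exp_mul_le (by positivity) hX le_rfl le_rfl
          (by norm_num))
    _ = _ := by rw [exp_zero, mul_zero, add_zero, one_mul]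

noncomputable def expNegMoment (m : Measure ℝ) (κ l : ℝ) : ℝ≥0∞ :=
  ∫⁻ s, (if s ≤ 0 then (⊤ : ℝ≥0∞) else ENNReal.ofReal (Real.exp (l * s ^ (-κ)))) ∂m

lemma expNegMoment_eq_lintegral {m : Measure ℝ} {κ l : ℝ} (hm : m (Iic 0) = 0) :
    expNegMoment m κ l = ∫⁻ s, ENNReal.ofReal (exp (l * s ^ (-κ))) ∂m := by
  refine lintegral_congr_ae ?_
  filter_upwards [measure_eq_zero_iff_ae_notMem.1 hm] with s hs
  rw [if_neg (show ¬s ≤ 0 from hs)]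

lemma exists_expNegMoment_le {φ : ℝ → ℝ} {μ : ℝ → Measure ℝ}
    (hμprob : ∀ t > 0, IsProbabilityMeasure (μ t))
    (hlaplace : ∀ t > 0, ∀ u > 0, ∫ s, exp (-u * s) ∂(μ t) = exp (-t * φ u))
    {κ ρ C₁ : ℝ} (hκ : 0 < κ) (hρl : κ / (1 + κ) < ρ) (hρ1 : ρ ≤ 1) (hC₁ : 0 < C₁) :
    ∃ K > 0, ∀ c₂, 0 ≤ c₂ → (∀ u, c₂ ≤ u → 0 < u → C₁ * u ^ ρ ≤ φ u) → ∀ l > 0, ∀ t > 0,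
      expNegMoment (μ t) κ l ≤ ENNReal.ofReal (exp
        (K * (l / t ^ (κ / ρ) + (l / t ^ (κ / ρ)) ^ (ρ / (ρ - (1 - ρ) * κ)))
          + (2 * c₂ ^ (1 - ρ) / C₁) ^ κ * (l / t ^ κ))) := by
  have hρ0 : 0 < ρ := (div_pos hκ (by linarith)).trans hρl
  suffices ∃ K > 0, ∀ (m : Measure ℝ) [IsProbabilityMeasure m] (t c₂ l : ℝ), 0 < t → 0 ≤ c₂ →
      0 < l → SmallBallBound m t C₁ ρ c₂ → expNegMoment m κ l ≤ ENNReal.ofReal (exp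
        (K * (l / t ^ (κ / ρ) + (l / t ^ (κ / ρ)) ^ (ρ / (ρ - (1 - ρ) * κ)))
          + (2 * c₂ ^ (1 - ρ) / C₁) ^ κ * (l / t ^ κ))) by
    obtain ⟨K, hK, hbound⟩ := this
    refine ⟨K, hK, fun c₂ hc₂ hφ l hl t ht => ?_⟩
    have := hμprob t ht
    exact hbound (μ t) t c₂ l ht hc₂ hl (.of_integral_exp_neg ht.le (hlaplace t ht) hφ)
  rcases hρ1.lt_or_eq with hρ | rfl
  · obtain ⟨K, hK, hbound⟩ := exists_lintegral_exp_rpow_neg_le_of_lt_one hκ hρl hρ hC₁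
    refine ⟨K, hK, fun m _ t c₂ l ht hc₂ hl h => ?_⟩
    rw [expNegMoment_eq_lintegral (h.measure_Iic_zero hρ0 (by positivity))]
    exact hbound m t c₂ l ht hc₂ hl h
  · refine ⟨C₁ ^ (-κ) + 1, by positivity, fun m _ t c₂ l ht hc₂ hl h => ?_⟩
    rw [expNegMoment_eq_lintegral (h.measure_Iic_zero hρ0 (by positivity))]
    refine (h.lintegral_exp_rpow_neg_le_of_one hκ ht hC₁ hl).trans
      (ENNReal.ofReal_le_ofReal (exp_le_exp.2 ?_))
    simp only [div_one, sub_self, rpow_zero, mul_one, zero_mul, sub_zero, rpow_one]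
    nlinarith [(by positivity : 0 ≤ l / t ^ κ), (by positivity : 0 ≤ (2 / C₁) ^ κ * (l / t ^ κ)),
      (by positivity : 0 ≤ C₁ ^ (-κ) * (l / t ^ κ))]

lemma div_rpow_le_add_div_rpow {κ ρ t l : ℝ} (hκ : 0 ≤ κ) (hρ0 : 0 < ρ) (hρ1 : ρ ≤ 1)
    (ht : 0 < t) (hl : 0 ≤ l) : l / t ^ κ ≤ l + l / t ^ (κ / ρ) := by
  rcases le_total 1 t with h | h
  · linarith [div_le_self hl (one_le_rpow h hκ), div_nonneg hl (rpow_nonneg ht.le (κ / ρ))]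
  · have : t ^ (κ / ρ) ≤ t ^ κ := rpow_le_rpow_of_exponent_ge ht h (le_div_self hκ hρ0 hρ1)
    linarith [div_le_div_of_nonneg_left hl (by positivity) this]

lemma add_rpow_add_le_mul_min_rpow_neg {κ ρ δ t l : ℝ} (hκ : 0 ≤ κ) (hδ : 0 < δ) (hδρ : δ ≤ ρ)
    (ht : 0 < t) (hl : 0 < l) :
    l + (l / t ^ (κ / ρ)) ^ (ρ / δ) + l / t ^ (κ / ρ) ≤
      (2 * l + l ^ (ρ / δ)) * min t 1 ^ (-(κ / δ)) := by
  have hρ : 0 < ρ := hδ.trans_le hδρ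
  rcases le_total 1 t with h | h
  · have hX : l / t ^ (κ / ρ) ≤ l := div_le_self hl.le (one_le_rpow h (by positivity))
    rw [min_eq_right h, one_rpow, mul_one]
    linarith [rpow_le_rpow (by positivity) hX (by positivity : 0 ≤ ρ / δ)]
  · rw [min_eq_left h]
    set T := t ^ (-(κ / δ))
    have hT : 1 ≤ T := one_le_rpow_of_pos_of_le_one_of_nonpos ht h (by simp; positivity)
    have hX : l / t ^ (κ / ρ) = l * t ^ (-(κ / ρ)) := by rw [rpow_neg ht.le, div_eq_mul_inv]
    have hXT : l / t ^ (κ / ρ) ≤ l * T := by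
      rw [hX]
      gcongr
      exact rpow_le_rpow_of_exponent_ge ht h (neg_le_neg (div_le_div_of_nonneg_left hκ hδ hδρ))
    have hXp : (l / t ^ (κ / ρ)) ^ (ρ / δ) = l ^ (ρ / δ) * T := by
      rw [hX, mul_rpow hl.le (by positivity), ← rpow_mul ht.le]
      congr 2
      field_simp
    nlinarith [rpow_nonneg hl.le (ρ / δ)]

lemma two_mul_zero_rpow_div_rpow_mul_le {κ ρ C₁ t l : ℝ} (hρ1 : ρ ≤ 1) (hκ : 0 < κ) (hC₁ : 0 < C₁)
    (ht : 0 < t) (hl : 0 < l) :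
    (2 * 0 ^ (1 - ρ) / C₁) ^ κ * (l / t ^ κ) ≤ (2 / C₁) ^ κ * (l / t ^ (κ / ρ)) := by
  rcases hρ1.lt_or_eq with hρ | rfl
  · rw [zero_rpow (by linarith), mul_zero, zero_div, zero_rpow hκ.ne', zero_mul]
    positivity
  · simp

theorem subordinator_exponential_negative_moment_estimate_general
    (φ : ℝ → ℝ)
    (μ : ℝ → Measure ℝ)
    (hμprob : ∀ t > 0, IsProbabilityMeasure (μ t))
    (hlaplace : ∀ t > 0, ∀ u > 0, ∫ s, Real.exp (-u * s) ∂(μ t) = Real.exp (-t * φ u))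
    (κ ρ C₁ C₂ : ℝ) (hκ : 0 < κ) (hρl : κ / (1 + κ) < ρ) (hρ1 : ρ ≤ 1)
    (hC₁ : 0 < C₁) (hC₂ : 0 ≤ C₂)
    (hlow : ∀ u ≥ C₂, C₁ * u ^ ρ ≤ φ u) :
    (∃ C > 0, ∀ l > 0, ∀ t > 0,
      ∫⁻ s, (if s ≤ 0 then (⊤ : ℝ≥0∞)
          else ENNReal.ofReal (Real.exp (l * s ^ (-κ)))) ∂(μ t) ≤
        ENNReal.ofReal (Real.exp (C * (l
          + (l / t ^ (κ / ρ)) ^ (ρ / (ρ - (1 - ρ) * κ))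
          + l / t ^ (κ / ρ)))))
    ∧ (∀ l > 0, ∃ C > 0, ∀ t > 0,
      ∫⁻ s, (if s ≤ 0 then (⊤ : ℝ≥0∞)
          else ENNReal.ofReal (Real.exp (l * s ^ (-κ)))) ∂(μ t) ≤
        ENNReal.ofReal (Real.exp (C * (min t 1) ^ (-(κ / (ρ - (1 - ρ) * κ))))))
    ∧ ((∀ u > 0, C₁ * u ^ ρ ≤ φ u) →
      ∃ C > 0, ∀ l > 0, ∀ t > 0,
        ∫⁻ s, (if s ≤ 0 then (⊤ : ℝ≥0∞)
            else ENNReal.ofReal (Real.exp (l * s ^ (-κ)))) ∂(μ t) ≤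
          ENNReal.ofReal (Real.exp (C * ((l / t ^ (κ / ρ)) ^ (ρ / (ρ - (1 - ρ) * κ))
            + l / t ^ (κ / ρ))))) := by
  have hρ0 : 0 < ρ := (div_pos hκ (by linarith)).trans hρl
  have hδ := sub_one_sub_mul_pos hκ hρl
  obtain ⟨K, hK, hμ⟩ := exists_expNegMoment_le hμprob hlaplace hκ hρl hρ1 hC₁
  have part₁ : ∃ C > 0, ∀ l > 0, ∀ t > 0, expNegMoment (μ t) κ l ≤ ENNReal.ofReal (exp (C *
      (l + (l / t ^ (κ / ρ)) ^ (ρ / (ρ - (1 - ρ) * κ)) + l / t ^ (κ / ρ)))) := by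
    refine ⟨K + (2 * C₂ ^ (1 - ρ) / C₁) ^ κ, by positivity, fun l hl t ht =>
      (hμ C₂ hC₂ (fun u hu _ => hlow u hu) l hl t ht).trans
        (ENNReal.ofReal_le_ofReal (exp_le_exp.2 ?_))⟩
    nlinarith [div_rpow_le_add_div_rpow hκ.le hρ0 hρ1 ht hl.le,
      rpow_nonneg (div_nonneg hl.le (rpow_nonneg ht.le (κ / ρ))) (ρ / (ρ - (1 - ρ) * κ)),
      (by positivity : 0 ≤ (2 * C₂ ^ (1 - ρ) / C₁) ^ κ)]
  refine ⟨part₁, fun l hl => ?_, fun hφ => ?_⟩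
  · obtain ⟨C, hC, hpart₁⟩ := part₁
    refine ⟨C * (2 * l + l ^ (ρ / (ρ - (1 - ρ) * κ))), by positivity, fun t ht =>
      (hpart₁ l hl t ht).trans (ENNReal.ofReal_le_ofReal (exp_le_exp.2 ?_))⟩
    rw [mul_assoc]
    exact mul_le_mul_of_nonneg_left
      (add_rpow_add_le_mul_min_rpow_neg hκ.le hδ (by nlinarith) ht hl) hC.le
  · refine ⟨K + (2 / C₁) ^ κ, by positivity, fun l hl t ht =>
      (hμ 0 le_rfl (fun u _ hu => hφ u hu) l hl t ht).trans
        (ENNReal.ofReal_le_ofReal (exp_le_exp.2 ?_))⟩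
    nlinarith [two_mul_zero_rpow_div_rpow_mul_le hρ1 hκ hC₁ ht hl,
      rpow_nonneg (div_nonneg hl.le (rpow_nonneg ht.le (κ / ρ))) (ρ / (ρ - (1 - ρ) * κ)),
      (by positivity : 0 ≤ (2 / C₁) ^ κ), (by positivity : 0 ≤ l / t ^ (κ / ρ))]

/-- exponential negative moment estimates for a subordinator.
The integrand is `∞` for `s ≤ 0`, matching `e^{λ·0^{-κ}} = ∞`. -/
theorem subordinator_exponential_negative_moment_estimate
    (b : ℝ) (hb : 0 ≤ b)
    (ν : Measure ℝ) (hνsupp : ν (Set.Iic 0) = 0)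
    (hνint : ∫⁻ x, ENNReal.ofReal (min x 1) ∂ν < ⊤)
    (φ : ℝ → ℝ)
    (hφ : ∀ u > 0, φ u = b * u + ∫ x, (1 - Real.exp (-u * x)) ∂ν)
    (μ : ℝ → Measure ℝ)
    (hμprob : ∀ t > 0, IsProbabilityMeasure (μ t))
    (hμsupp : ∀ t > 0, μ t (Set.Iio 0) = 0)
    (hlaplace : ∀ t > 0, ∀ u > 0, ∫ s, Real.exp (-u * s) ∂(μ t) = Real.exp (-t * φ u))
    (κ ρ C₁ C₂ : ℝ) (hκ : 0 < κ) (hρl : κ / (1 + κ) < ρ) (hρ1 : ρ ≤ 1)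
    (hC₁ : 0 < C₁) (hC₂ : 0 ≤ C₂)
    (hlow : ∀ u ≥ C₂, C₁ * u ^ ρ ≤ φ u) :
    (∃ C > 0, ∀ l > 0, ∀ t > 0,
      ∫⁻ s, (if s ≤ 0 then (⊤ : ℝ≥0∞)
          else ENNReal.ofReal (Real.exp (l * s ^ (-κ)))) ∂(μ t) ≤
        ENNReal.ofReal (Real.exp (C * (l
          + (l / t ^ (κ / ρ)) ^ (ρ / (ρ - (1 - ρ) * κ))
          + l / t ^ (κ / ρ)))))
    ∧ (∀ l > 0, ∃ C > 0, ∀ t > 0,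
      ∫⁻ s, (if s ≤ 0 then (⊤ : ℝ≥0∞)
          else ENNReal.ofReal (Real.exp (l * s ^ (-κ)))) ∂(μ t) ≤
        ENNReal.ofReal (Real.exp (C * (min t 1) ^ (-(κ / (ρ - (1 - ρ) * κ))))))
    ∧ ((∀ u > 0, C₁ * u ^ ρ ≤ φ u) →
      ∃ C > 0, ∀ l > 0, ∀ t > 0,
        ∫⁻ s, (if s ≤ 0 then (⊤ : ℝ≥0∞)
            else ENNReal.ofReal (Real.exp (l * s ^ (-κ)))) ∂(μ t) ≤
          ENNReal.ofReal (Real.exp (C * ((l / t ^ (κ / ρ)) ^ (ρ / (ρ - (1 - ρ) * κ))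
            + l / t ^ (κ / ρ))))) :=
  subordinator_exponential_negative_moment_estimate_general φ μ hμprob hlaplace κ ρ C₁ C₂ hκ hρl hρ1
    hC₁ hC₂ hlow
end

section
/- Let κ > 0 and suppose there exist σ ∈ (0, κ/(1+κ)) and constants C₃ > 0, C₄ > 0 such that φ(u) ≤ C₃ u^σ for all u ≥ C₄. Then for every λ > 0 and every t > 0, the exponential negative moment is infinite: E e^{λ S_t^{-κ}} = ∫ e^{λ s^{-κ}} μ_t(ds) = ∞. -/
/-!
Put `a = u ^ (-β)` with `σ / κ < β < 1 - σ`. Bounding `e^{-us}` by `1` on `[0, a]` and by `e^{-ua}`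
beyond, the Laplace transform gives `μ_t (-∞, a] ≥ e^{-t C₃ u^σ} - e^{-u^{1-β}}`, while the integrand
is at least `e^{l u^{βκ}}` on `(0, a]`. Since `σ < 1 - β` and `σ < βκ`, the resulting lower bound
`e^{l u^{βκ}} (e^{-t C₃ u^σ} - e^{-u^{1-β}})` tends to infinity with `u`.
-/

open MeasureTheory Filter Set
open scoped ENNReal Classical

noncomputable def expNegPowIntegrand (l κ s : ℝ) : ℝ≥0∞ :=
  if s ≤ 0 then ⊤ else ENNReal.ofReal (Real.exp (l * s ^ (-κ)))

lemma tendsto_mul_rpow_sub_mul_rpow_atTop {d p q : ℝ} (c : ℝ) (hd : 0 < d) (hp : 0 < p)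
    (hqp : q < p) : Tendsto (fun u : ℝ => d * u ^ p - c * u ^ q) atTop atTop := by
  have hsmall : Tendsto (fun u : ℝ => d - c * u ^ (-(p - q))) atTop (nhds d) := by
    simpa using tendsto_const_nhds.sub
      ((tendsto_rpow_neg_atTop (sub_pos.2 hqp)).const_mul c)
  refine ((tendsto_rpow_atTop hp).atTop_mul_pos hd hsmall).congr' ?_
  filter_upwards [eventually_gt_atTop 0] with u hu
  rw [mul_sub, Real.rpow_neg hu.le, Real.rpow_sub hu]
  field_simp

lemma tendsto_exp_mul_rpow_mul_sub_atTop {l c p q r : ℝ} (hl : 0 < l) (hp : 0 < p) (hr : 0 < r)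
    (hqp : q < p) (hqr : q < r) :
    Tendsto (fun u : ℝ => Real.exp (l * u ^ p) * (Real.exp (-(c * u ^ q)) - Real.exp (-u ^ r)))
      atTop atTop := by
  have hgrow : Tendsto (fun u : ℝ => Real.exp (l * u ^ p - c * u ^ q)) atTop atTop :=
    Real.tendsto_exp_atTop.comp (tendsto_mul_rpow_sub_mul_rpow_atTop c hl hp hqp)
  have hdecay : Tendsto (fun u : ℝ => Real.exp (-(1 * u ^ r - c * u ^ q))) atTop (nhds 0) :=
    Real.tendsto_exp_atBot.comp
      (tendsto_neg_atTop_atBot.comp (tendsto_mul_rpow_sub_mul_rpow_atTop c one_pos hr hqr))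
  have hone : Tendsto (fun u : ℝ => 1 - Real.exp (-(1 * u ^ r - c * u ^ q))) atTop (nhds 1) := by
    simpa using tendsto_const_nhds.sub hdecay
  refine (hgrow.atTop_mul_pos one_pos hone).congr fun u => ?_
  simp only [mul_sub, mul_one, ← Real.exp_add]
  ring_nf

lemma ENNReal.eq_top_of_tendsto_atTop_of_eventually_ofReal_le {α : Type*} {l : Filter α}
    [l.NeBot] {f : α → ℝ} {I : ℝ≥0∞} (hf : Tendsto f l atTop)
    (hle : ∀ᶠ x in l, ENNReal.ofReal (f x) ≤ I) : I = ⊤ :=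
  top_le_iff.1 (le_of_tendsto (ENNReal.tendsto_ofReal_atTop.comp hf) hle)

lemma integral_exp_neg_mul_le {μ : Measure ℝ} [IsFiniteMeasure μ] (hμ : ∀ᵐ s ∂μ, 0 ≤ s)
    {u : ℝ} (hu : 0 ≤ u) (a : ℝ) :
    ∫ s, Real.exp (-u * s) ∂μ ≤ μ.real (Iic a) + μ.real univ * Real.exp (-u * a) := by
  have hint : Integrable (fun s => Real.exp (-u * s)) μ := by
    refine Integrable.mono' (integrable_const 1) (by fun_prop) ?_
    filter_upwards [hμ] with s hs
    rw [Real.norm_eq_abs, abs_of_pos (Real.exp_pos _), Real.exp_le_one_iff]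
    nlinarith
  have hbound : Integrable (fun s => (Iic a).indicator (fun _ => (1 : ℝ)) s
      + Real.exp (-u * a)) μ :=
    ((integrable_const 1).indicator measurableSet_Iic).add (integrable_const _)
  calc ∫ s, Real.exp (-u * s) ∂μ
      ≤ ∫ s, ((Iic a).indicator (fun _ => (1 : ℝ)) s + Real.exp (-u * a)) ∂μ := by
        refine integral_mono_ae hint hbound ?_
        filter_upwards [hμ] with s hs
        by_cases hsa : s ≤ a
        · rw [indicator_of_mem (mem_Iic.2 hsa)]
          have : Real.exp (-u * s) ≤ 1 := Real.exp_le_one_iff.2 (by nlinarith)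
          linarith [Real.exp_pos (-u * a)]
        · rw [indicator_of_notMem (by simpa using hsa), zero_add, Real.exp_le_exp]
          nlinarith [not_le.1 hsa]
    _ = μ.real (Iic a) + μ.real univ * Real.exp (-u * a) := by
        rw [integral_add ((integrable_const 1).indicator measurableSet_Iic) (integrable_const _),
          integral_indicator_const 1 measurableSet_Iic, integral_const, smul_eq_mul,
          smul_eq_mul, mul_one]

lemma lintegral_expNegPowIntegrand_eq_top {μ : Measure ℝ} (h0 : μ (Iic 0) ≠ 0) (l κ : ℝ) :
    ∫⁻ s, expNegPowIntegrand l κ s ∂μ = ⊤ := by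
  refine top_le_iff.1 ((setLIntegral_le_lintegral (Iic 0) _).trans' ?_)
  have htop : ∫⁻ s in Iic 0, expNegPowIntegrand l κ s ∂μ = ∫⁻ _ in Iic 0, ⊤ ∂μ :=
    setLIntegral_congr_fun measurableSet_Iic fun _ hs => if_pos hs
  rw [htop, setLIntegral_const, ENNReal.top_mul h0]

lemma ofReal_exp_mul_measure_Ioc_le_lintegral {μ : Measure ℝ} {l κ : ℝ} (hl : 0 ≤ l)
    (hκ : 0 ≤ κ) (a : ℝ) :
    ENNReal.ofReal (Real.exp (l * a ^ (-κ))) * μ (Ioc 0 a)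
      ≤ ∫⁻ s, expNegPowIntegrand l κ s ∂μ := by
  rw [← setLIntegral_const]
  refine (setLIntegral_mono' measurableSet_Ioc fun s hs => ?_).trans
    (setLIntegral_le_lintegral _ _)
  rw [expNegPowIntegrand, if_neg (not_le.2 hs.1)]
  exact ENNReal.ofReal_le_ofReal <| Real.exp_le_exp.2 <|
    mul_le_mul_of_nonneg_left (Real.rpow_le_rpow_of_nonpos hs.1 hs.2 (neg_nonpos.2 hκ)) hl

lemma ofReal_exp_mul_sub_le_lintegral {μ : Measure ℝ} [IsProbabilityMeasure μ]
    (h0 : μ (Iic 0) = 0) {l κ : ℝ} (hl : 0 ≤ l) (hκ : 0 ≤ κ) {u : ℝ} (hu : 0 ≤ u) (a : ℝ) :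
    ENNReal.ofReal (Real.exp (l * a ^ (-κ)) * (∫ s, Real.exp (-u * s) ∂μ - Real.exp (-u * a)))
      ≤ ∫⁻ s, expNegPowIntegrand l κ s ∂μ := by
  have hpos : ∀ᵐ s ∂μ, 0 ≤ s :=
    ae_iff.2 (measure_mono_null (fun s hs => le_of_lt (not_le.1 hs)) h0)
  have hIoc : μ (Ioc 0 a) = μ (Iic a) := by
    rw [← measure_sdiff_null (s := Iic a) h0]
    congr 1
    ext s
    simp [and_comm]
  have hsmall := integral_exp_neg_mul_le hpos hu a
  rw [probReal_univ, one_mul] at hsmall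
  refine le_trans ?_ (ofReal_exp_mul_measure_Ioc_le_lintegral hl hκ a)
  rw [hIoc, ENNReal.ofReal_mul (Real.exp_pos _).le, ← ofReal_measureReal]
  gcongr
  linarith

lemma exists_lt_mul_and_lt_one_sub {κ σ : ℝ} (hκ : 0 < κ) (hσκ : σ < κ / (1 + κ)) :
    ∃ β, σ < β * κ ∧ σ < 1 - β := by
  have : σ * (1 + κ) < κ := (lt_div_iff₀ (by positivity)).1 hσκ
  refine ⟨(σ / κ + (1 - σ)) / 2, ?_, ?_⟩
  · rw [div_mul_eq_mul_div, lt_div_iff₀ two_pos, add_mul, div_mul_cancel₀ _ hκ.ne']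
    nlinarith
  · rw [← sub_pos, ← mul_pos_iff_of_pos_right hκ]
    field_simp
    nlinarith

theorem subordinator_exponential_negative_moment_infinite_general
    (φ : ℝ → ℝ)
    (μ : ℝ → Measure ℝ)
    (hμprob : ∀ t > 0, IsProbabilityMeasure (μ t))
    (hlaplace : ∀ t > 0, ∀ u > 0, ∫ s, Real.exp (-u * s) ∂(μ t) = Real.exp (-t * φ u))
    (κ σ C₃ C₄ : ℝ) (hκ : 0 < κ) (hσ0 : 0 < σ) (hσκ : σ < κ / (1 + κ))
    (hup : ∀ u ≥ C₄, φ u ≤ C₃ * u ^ σ) :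
    ∀ l : ℝ, 0 < l → ∀ t : ℝ, 0 < t →
      ∫⁻ s, (if s ≤ 0 then (⊤ : ℝ≥0∞)
          else ENNReal.ofReal (Real.exp (l * s ^ (-κ)))) ∂(μ t) = ⊤ := by
  intro l hl t ht
  have := hμprob t ht
  change ∫⁻ s, expNegPowIntegrand l κ s ∂μ t = ⊤
  obtain h0 | h0 := ne_or_eq (μ t (Iic 0)) 0
  · exact lintegral_expNegPowIntegrand_eq_top h0 l κ
  obtain ⟨β, hσβκ, hσβ⟩ := exists_lt_mul_and_lt_one_sub hκ hσκ
  refine ENNReal.eq_top_of_tendsto_atTop_of_eventually_ofReal_le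
    (tendsto_exp_mul_rpow_mul_sub_atTop (c := t * C₃) hl (hσ0.trans hσβκ) (hσ0.trans hσβ)
      hσβκ hσβ) ?_
  filter_upwards [eventually_ge_atTop C₄, eventually_gt_atTop 0] with u huC hu
  refine le_trans ?_ (ofReal_exp_mul_sub_le_lintegral h0 hl.le hκ.le hu.le (u ^ (-β)))
  have hua : u * u ^ (-β) = u ^ (1 - β) := by
    rw [sub_eq_add_neg, Real.rpow_add hu, Real.rpow_one]
  rw [hlaplace t ht u hu, ← Real.rpow_mul hu.le, neg_mul_neg, neg_mul u, hua]
  gcongr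
  nlinarith [hup u huC]

/-- if φ(u) ≤ C₃ u^σ for large u with σ < κ/(1+κ), then the
exponential negative moment of order κ is infinite. -/
theorem subordinator_exponential_negative_moment_infinite
    (b : ℝ) (hb : 0 ≤ b)
    (ν : Measure ℝ) (hνsupp : ν (Set.Iic 0) = 0)
    (hνint : ∫⁻ x, ENNReal.ofReal (min x 1) ∂ν < ⊤)
    (φ : ℝ → ℝ)
    (hφ : ∀ u > 0, φ u = b * u + ∫ x, (1 - Real.exp (-u * x)) ∂ν)
    (μ : ℝ → Measure ℝ)
    (hμprob : ∀ t > 0, IsProbabilityMeasure (μ t))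
    (hμsupp : ∀ t > 0, μ t (Set.Iio 0) = 0)
    (hlaplace : ∀ t > 0, ∀ u > 0, ∫ s, Real.exp (-u * s) ∂(μ t) = Real.exp (-t * φ u))
    (κ σ C₃ C₄ : ℝ) (hκ : 0 < κ) (hσ0 : 0 < σ) (hσκ : σ < κ / (1 + κ))
    (hC₃ : 0 < C₃) (hC₄ : 0 < C₄)
    (hup : ∀ u ≥ C₄, φ u ≤ C₃ * u ^ σ) :
    ∀ l : ℝ, 0 < l → ∀ t : ℝ, 0 < t →
      ∫⁻ s, (if s ≤ 0 then (⊤ : ℝ≥0∞)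
          else ENNReal.ofReal (Real.exp (l * s ^ (-κ)))) ∂(μ t) = ⊤ :=
  subordinator_exponential_negative_moment_infinite_general φ μ hμprob hlaplace κ σ C₃ C₄ hκ hσ0 hσκ
    hup
end

section
/- Suppose the Lévy measure ν is not the zero measure. Then there exists a unit vector x₀ ∈ ℝ^d such that, with the cone D := { z ∈ ℝ^d \ {0} : ⟨x₀, z⟩/|z| ≥ cos(π/8) }, one has liminf_{ξ ∈ D, |ξ| → 0} |ψ(ξ)|/|ξ|² > 0. Consequently, for every α > 2 it is not the case that lim_{|ξ|→0} |ψ(ξ)|/|ξ|^α = 0; i.e. the index β₀ := sup{ α ≥ 0 : lim_{|ξ|→0} |ψ(ξ)|/|ξ|^α = 0 } satisfies β₀ ≤ 2. -/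
/-!
Since `ν ≠ 0` and `ν {0} = 0`, some ball `B = ball y₀ (‖y₀‖/4)` with `y₀ ≠ 0` has positive (and,
by the integrability condition, finite) `ν`-measure. For `ξ` in the `π/8`-cone around `y₀`,
`⟪ξ, y⟫ ≥ ‖ξ‖‖y₀‖/4` on `B`, and for small `ξ` also `⟪ξ, y⟫ ≤ π`, so the bound
`1 - cos t ≥ 2t²/π²` gives
`‖ψ ξ‖ ≥ Re ψ ξ ≥ ∫_B (1 - cos ⟪ξ, y⟫) dν ≥ c ‖ξ‖²`.
Along the ray through `y₀` this forces `‖ψ ξ‖/‖ξ‖^α ≥ c` for `α > 2`.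
-/

open MeasureTheory Filter Set
open scoped ENNReal

open Metric Topology
open scoped InnerProductSpace

lemma Complex.norm_exp_I_mul_ofReal_sub_one_sub_le (t : ℝ) :
    ‖Complex.exp (Complex.I * t) - 1 - Complex.I * t‖ ≤ 2 * t ^ 2 := by
  rcases le_or_gt |t| 1 with ht | ht
  · calc _ ≤ ‖Complex.I * t‖ ^ 2 := Complex.norm_exp_sub_one_sub_id_le (by simpa using ht)
      _ ≤ 2 * t ^ 2 := by simp [sq_abs]; nlinarith [sq_nonneg t]
  · calc _ ≤ ‖Complex.exp (Complex.I * t) - 1‖ + ‖Complex.I * t‖ := norm_sub_le _ _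
      _ ≤ |t| + |t| := by
          gcongr
          · exact Real.norm_exp_I_mul_ofReal_sub_one_le
          · simp
      _ ≤ 2 * t ^ 2 := by nlinarith [sq_abs t]

section Geometry

variable {E : Type*} [NormedAddCommGroup E] [InnerProductSpace ℝ E]

lemma inner_sub_norm_mul_le_inner_of_mem_ball (ξ : E) {y₀ y : E} {r : ℝ} (hy : y ∈ ball y₀ r) :
    ⟪ξ, y₀⟫_ℝ - ‖ξ‖ * r ≤ ⟪ξ, y⟫_ℝ := by
  have hdiff := (abs_le.1 (abs_real_inner_le_norm ξ (y - y₀))).1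
  have hr : ‖ξ‖ * ‖y - y₀‖ ≤ ‖ξ‖ * r :=
    mul_le_mul_of_nonneg_left (mem_ball_iff_norm.1 hy).le (norm_nonneg ξ)
  rw [inner_sub_right] at hdiff
  linarith

lemma norm_mul_norm_div_two_le_inner {y₀ ξ : E} (hy₀ : y₀ ≠ 0) (hξ : ξ ≠ 0)
    (hcone : Real.cos (Real.pi / 8) ≤ ⟪‖y₀‖⁻¹ • y₀, ξ⟫_ℝ / ‖ξ‖) :
    ‖ξ‖ * ‖y₀‖ / 2 ≤ ⟪ξ, y₀⟫_ℝ := by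
  have hcos : 1 / 2 ≤ Real.cos (Real.pi / 8) := by
    rw [← Real.cos_pi_div_three]
    exact Real.cos_le_cos_of_nonneg_of_le_pi (by positivity) (by linarith [Real.pi_pos])
      (by linarith [Real.pi_pos])
  rw [real_inner_smul_left, real_inner_comm, inv_mul_eq_div, div_div,
    le_div_iff₀ (by positivity)] at hcone
  nlinarith [mul_le_mul_of_nonneg_right hcos (by positivity : 0 ≤ ‖y₀‖ * ‖ξ‖)]

lemma not_tendsto_div_rpow_of_cone {g : E → ℝ} {x₀ : E} (hx₀ : ‖x₀‖ = 1) {κ : ℝ} (hκ : κ ≤ 1)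
    (h : ∃ c > 0, ∃ δ > 0, ∀ ξ : E, ξ ≠ 0 → κ ≤ ⟪x₀, ξ⟫_ℝ / ‖ξ‖ → ‖ξ‖ < δ →
      c ≤ g ξ / ‖ξ‖ ^ 2)
    {α : ℝ} (hα : 2 < α) : ¬Tendsto (fun ξ => g ξ / ‖ξ‖ ^ α) (𝓝[≠] 0) (𝓝 0) := by
  intro hlim
  obtain ⟨c, hc, δ, hδ, hg⟩ := h
  have hx₀' : x₀ ≠ 0 := norm_ne_zero_iff.1 (by simp [hx₀])
  have hray : Tendsto (fun s : ℝ => s • x₀) (𝓝[>] 0) (𝓝[≠] 0) := by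
    refine tendsto_nhdsWithin_iff.2 ⟨?_, ?_⟩
    · have hcont : Continuous fun s : ℝ => s • x₀ := continuous_id.smul continuous_const
      simpa using (hcont.tendsto 0).mono_left nhdsWithin_le_nhds
    · filter_upwards [self_mem_nhdsWithin] with s hs using smul_ne_zero hs.ne' hx₀'
  have hlow : ∀ᶠ s in 𝓝[>] (0 : ℝ), c ≤ g (s • x₀) / ‖s • x₀‖ ^ α := by
    filter_upwards [Ioo_mem_nhdsGT (lt_min hδ one_pos)] with s ⟨hs0, hs⟩
    have hnorm : ‖s • x₀‖ = s := by rw [norm_smul, hx₀, mul_one, Real.norm_of_nonneg hs0.le]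
    have hcone : κ ≤ ⟪x₀, s • x₀⟫_ℝ / ‖s • x₀‖ := by
      rwa [real_inner_smul_right, real_inner_self_eq_norm_sq, hx₀, hnorm, one_pow, mul_one,
        div_self hs0.ne']
    have hsq := hg _ (smul_ne_zero hs0.ne' hx₀') hcone
      (by rw [hnorm]; exact hs.trans_le (min_le_left _ _))
    rw [hnorm] at hsq ⊢
    have hg0 : 0 ≤ g (s • x₀) := by
      rw [le_div_iff₀ (by positivity)] at hsq
      nlinarith
    have hpow : s ^ α ≤ s ^ 2 := by
      simpa using Real.rpow_le_rpow_of_exponent_ge hs0 (hs.le.trans (min_le_right _ _)) hα.le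
    exact hsq.trans (div_le_div_of_nonneg_left hg0 (by positivity) hpow)
  have := ge_of_tendsto (hlim.comp hray) hlow
  linarith

end Geometry

lemma mul_measureReal_le_integral_one_sub_cos {α : Type*} [MeasurableSpace α] {ν : Measure α}
    {g : α → ℝ} (hint : Integrable (fun y => 1 - Real.cos (g y)) ν) {B : Set α}
    (hB : MeasurableSet B) (hBfin : ν B ≠ ∞) {a : ℝ} (ha : 0 ≤ a)
    (hg : ∀ y ∈ B, a ≤ g y ∧ g y ≤ Real.pi) :
    2 / Real.pi ^ 2 * a ^ 2 * ν.real B ≤ ∫ y, 1 - Real.cos (g y) ∂ν := by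
  calc 2 / Real.pi ^ 2 * a ^ 2 * ν.real B ≤ ∫ y in B, 1 - Real.cos (g y) ∂ν := by
        rw [mul_comm, ← smul_eq_mul]
        refine setIntegral_ge_of_const_le hB hBfin (fun y hy => ?_) hint.integrableOn
        obtain ⟨hay, hyπ⟩ := hg y hy
        have hcos := Real.cos_le_one_sub_mul_cos_sq (abs_le.2 ⟨by linarith [Real.pi_pos], hyπ⟩)
        have hsq : a ^ 2 ≤ g y ^ 2 := pow_le_pow_left₀ ha hay 2
        have : 0 ≤ 2 / Real.pi ^ 2 := by positivity
        nlinarith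
    _ ≤ ∫ y, 1 - Real.cos (g y) ∂ν :=
        setIntegral_le_integral hint (ae_of_all _ fun y => sub_nonneg.2 (Real.cos_le_one _))

lemma exists_ne_zero_measure_ball_pos {E : Type*} [NormedAddCommGroup E] [MeasurableSpace E]
    [SecondCountableTopology E] {μ : Measure E} (h0 : μ {0} = 0) (hμ : μ ≠ 0) {c : ℝ}
    (hc : 0 < c) : ∃ y₀ ≠ 0, 0 < μ (ball y₀ (c * ‖y₀‖)) := by
  by_contra! hball
  have hcompl : μ {0}ᶜ = 0 := measure_null_of_locally_null _ fun y hy =>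
    ⟨_, mem_nhdsWithin_of_mem_nhds (ball_mem_nhds y (mul_pos hc (norm_pos_iff.2 hy))),
      nonpos_iff_eq_zero.1 (hball y hy)⟩
  exact hμ (Measure.measure_univ_eq_zero.1 (nonpos_iff_eq_zero.1
    ((measure_univ_le_add_compl {0}).trans_eq (by rw [h0, hcompl, add_zero]))))

lemma measure_le_norm_lt_top {E : Type*} [NormedAddCommGroup E] [MeasurableSpace E]
    [OpensMeasurableSpace E] {ν : Measure E}
    (hν : ∫⁻ y, ENNReal.ofReal (min 1 (‖y‖ ^ 2)) ∂ν < ⊤) {r : ℝ} (hr : 0 < r) :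
    ν {y | r ≤ ‖y‖} < ∞ := by
  have hε : ENNReal.ofReal (min 1 (r ^ 2)) ≠ 0 := by simp [hr.ne']
  calc ν {y | r ≤ ‖y‖}
        ≤ ν {y | ENNReal.ofReal (min 1 (r ^ 2)) ≤ ENNReal.ofReal (min 1 (‖y‖ ^ 2))} :=
        measure_mono fun y hy =>
          ENNReal.ofReal_le_ofReal (min_le_min le_rfl (by gcongr; exact hy))
    _ ≤ (∫⁻ y, ENNReal.ofReal (min 1 (‖y‖ ^ 2)) ∂ν) / ENNReal.ofReal (min 1 (r ^ 2)) :=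
        meas_ge_le_lintegral_div (by fun_prop) hε ENNReal.ofReal_ne_top
    _ < ∞ := ENNReal.div_lt_top hν.ne hε

section LevyKhintchine

variable {E : Type*} [NormedAddCommGroup E] [InnerProductSpace ℝ E]

noncomputable def levyIntegrand (ξ y : E) : ℂ :=
  1 - Complex.exp (Complex.I * (⟪ξ, y⟫_ℝ : ℂ))
    + Complex.I * ((Set.indicator {y : E | y ≠ 0 ∧ ‖y‖ < 1} (fun y => ⟪ξ, y⟫_ℝ) y : ℝ) : ℂ)

noncomputable def levySymbol [MeasurableSpace E] (ℓ : E) (Q : E →ₗ[ℝ] E) (ν : Measure E)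
    (ξ : E) : ℂ :=
  -Complex.I * (⟪ℓ, ξ⟫_ℝ : ℂ) + (((1 / 2 : ℝ) * ⟪ξ, Q ξ⟫_ℝ : ℝ) : ℂ) + ∫ y, levyIntegrand ξ y ∂ν

lemma levyIntegrand_re (ξ y : E) : (levyIntegrand ξ y).re = 1 - Real.cos ⟪ξ, y⟫_ℝ := by
  rw [levyIntegrand, mul_comm Complex.I]
  simp [Complex.exp_ofReal_mul_I_re, Complex.mul_re]

lemma norm_levyIntegrand_le (ξ y : E) :
    ‖levyIntegrand ξ y‖ ≤ 2 * (1 + ‖ξ‖ ^ 2) * min 1 (‖y‖ ^ 2) := by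
  set t := ⟪ξ, y⟫_ℝ
  by_cases hy : y ≠ 0 ∧ ‖y‖ < 1
  · have hF : levyIntegrand ξ y = -(Complex.exp (Complex.I * t) - 1 - Complex.I * t) := by
      simp only [levyIntegrand,
        Set.indicator_of_mem (show y ∈ {y : E | y ≠ 0 ∧ ‖y‖ < 1} from hy)]
      ring
    have ht : t ^ 2 ≤ ‖ξ‖ ^ 2 * ‖y‖ ^ 2 := by
      rw [← mul_pow, ← sq_abs]
      exact pow_le_pow_left₀ (abs_nonneg t) (abs_real_inner_le_norm ξ y) 2
    rw [hF, norm_neg, min_eq_right (by nlinarith [hy.2, norm_nonneg y])]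
    nlinarith [Complex.norm_exp_I_mul_ofReal_sub_one_sub_le t, sq_nonneg ‖y‖, sq_nonneg ‖ξ‖]
  · have hF : levyIntegrand ξ y = 1 - Complex.exp (Complex.I * t) := by
      simp only [levyIntegrand, Complex.ofReal_zero, mul_zero, add_zero, t,
        Set.indicator_of_notMem (show y ∉ {y : E | y ≠ 0 ∧ ‖y‖ < 1} from hy)]
    rcases eq_or_ne y 0 with rfl | hy0
    · simp [hF, t]
    have hy1 : 1 ≤ ‖y‖ := le_of_not_gt fun h => hy ⟨hy0, h⟩
    have hexp : ‖1 - Complex.exp (Complex.I * t)‖ ≤ 2 := by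
      calc _ ≤ ‖(1 : ℂ)‖ + ‖Complex.exp (Complex.I * t)‖ := norm_sub_le _ _
        _ = 2 := by rw [mul_comm, Complex.norm_exp_ofReal_mul_I]; norm_num
    rw [hF, min_eq_left (by nlinarith)]
    nlinarith [sq_nonneg ‖ξ‖]

variable [MeasurableSpace E] [BorelSpace E] {ν : Measure E}

lemma integrable_levyIntegrand (hν : ∫⁻ y, ENNReal.ofReal (min 1 (‖y‖ ^ 2)) ∂ν < ⊤) (ξ : E) :
    Integrable (levyIntegrand ξ) ν := by
  have hmin : Integrable (fun y : E => min 1 (‖y‖ ^ 2)) ν :=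
    ⟨(by fun_prop : Measurable fun y : E => min 1 (‖y‖ ^ 2)).aestronglyMeasurable,
      (hasFiniteIntegral_iff_ofReal (ae_of_all _ fun y => by positivity)).2 hν⟩
  refine (hmin.const_mul _).mono' ?_ (ae_of_all _ (norm_levyIntegrand_le ξ))
  have hA : MeasurableSet {y : E | y ≠ 0 ∧ ‖y‖ < 1} :=
    (measurableSet_singleton 0).compl.inter (measurableSet_lt measurable_norm measurable_const)
  have hinner : Measurable fun y : E => ⟪ξ, y⟫_ℝ := by fun_prop
  exact (measurable_const.sub (by fun_prop)).add
    ((Complex.measurable_ofReal.comp (hinner.indicator hA)).const_mul _) |>.aestronglyMeasurable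

lemma levySymbol_re (hν : ∫⁻ y, ENNReal.ofReal (min 1 (‖y‖ ^ 2)) ∂ν < ⊤) (ℓ : E)
    (Q : E →ₗ[ℝ] E) (ξ : E) :
    (levySymbol ℓ Q ν ξ).re = 1 / 2 * ⟪ξ, Q ξ⟫_ℝ + ∫ y, (1 - Real.cos ⟪ξ, y⟫_ℝ) ∂ν := by
  have hre : (∫ y, levyIntegrand ξ y ∂ν).re = ∫ y, (1 - Real.cos ⟪ξ, y⟫_ℝ) ∂ν := by
    simp_rw [← levyIntegrand_re]
    exact (integral_re (integrable_levyIntegrand hν ξ)).symm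
  simp [levySymbol, hre]

lemma le_norm_levySymbol_div_sq (hν : ∫⁻ y, ENNReal.ofReal (min 1 (‖y‖ ^ 2)) ∂ν < ⊤) (ℓ : E)
    (Q : E →ₗ[ℝ] E) {y₀ ξ : E} (hQξ : 0 ≤ ⟪ξ, Q ξ⟫_ℝ) (hB : ν (ball y₀ (‖y₀‖ / 4)) ≠ ∞)
    (hξ : ξ ≠ 0) (hcone : ‖ξ‖ * ‖y₀‖ / 2 ≤ ⟪ξ, y₀⟫_ℝ) (hsmall : ‖ξ‖ * ‖y₀‖ ≤ 2) :
    2 / Real.pi ^ 2 * (‖y₀‖ / 4) ^ 2 * ν.real (ball y₀ (‖y₀‖ / 4))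
      ≤ ‖levySymbol ℓ Q ν ξ‖ / ‖ξ‖ ^ 2 := by
  have hint : Integrable (fun y => 1 - Real.cos ⟪ξ, y⟫_ℝ) ν := by
    refine (integrable_levyIntegrand hν ξ).re.congr (ae_of_all _ fun y => ?_)
    exact levyIntegrand_re ξ y
  have hinner : ∀ y ∈ ball y₀ (‖y₀‖ / 4),
      ‖ξ‖ * ‖y₀‖ / 4 ≤ ⟪ξ, y⟫_ℝ ∧ ⟪ξ, y⟫_ℝ ≤ Real.pi := by
    intro y hy
    refine ⟨by linarith [inner_sub_norm_mul_le_inner_of_mem_ball ξ hy], ?_⟩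
    have hy' : ‖y‖ ≤ ‖y₀‖ + ‖y₀‖ / 4 :=
      (norm_le_norm_add_norm_sub' y y₀).trans (by linarith [mem_ball_iff_norm.1 hy])
    calc ⟪ξ, y⟫_ℝ ≤ ‖ξ‖ * ‖y‖ := real_inner_le_norm ξ y
      _ ≤ ‖ξ‖ * (‖y₀‖ + ‖y₀‖ / 4) := by gcongr
      _ ≤ Real.pi := by nlinarith [Real.pi_gt_three]
  rw [le_div_iff₀ (by positivity [norm_pos_iff.2 hξ])]
  calc _ = 2 / Real.pi ^ 2 * (‖ξ‖ * ‖y₀‖ / 4) ^ 2 * ν.real (ball y₀ (‖y₀‖ / 4)) := by ring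
    _ ≤ ∫ y, 1 - Real.cos ⟪ξ, y⟫_ℝ ∂ν :=
        mul_measureReal_le_integral_one_sub_cos hint measurableSet_ball hB (by positivity) hinner
    _ ≤ (levySymbol ℓ Q ν ξ).re := by rw [levySymbol_re hν]; linarith
    _ ≤ ‖levySymbol ℓ Q ν ξ‖ := Complex.re_le_norm _

end LevyKhintchine

theorem levy_symbol_index_at_origin_le_two_general
    (d : ℕ)
    (ℓ : EuclideanSpace ℝ (Fin d))
    (Q : EuclideanSpace ℝ (Fin d) →ₗ[ℝ] EuclideanSpace ℝ (Fin d))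
    (hQpos : ∀ ξ, 0 ≤ (inner ℝ ξ (Q ξ) : ℝ))
    (ν : Measure (EuclideanSpace ℝ (Fin d)))
    (hν0 : ν {0} = 0)
    (hν : ∫⁻ y, ENNReal.ofReal (min 1 (‖y‖ ^ 2)) ∂ν < ⊤)
    (ψ : EuclideanSpace ℝ (Fin d) → ℂ)
    (hψ : ∀ ξ, ψ ξ = -Complex.I * ((inner ℝ ℓ ξ : ℝ) : ℂ)
        + (((1 / 2 : ℝ) * (inner ℝ ξ (Q ξ) : ℝ) : ℝ) : ℂ)
        + ∫ y, ((1 : ℂ) - Complex.exp (Complex.I * ((inner ℝ ξ y : ℝ) : ℂ))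
            + Complex.I * ((Set.indicator {y : EuclideanSpace ℝ (Fin d) | y ≠ 0 ∧ ‖y‖ < 1}
                (fun y => (inner ℝ ξ y : ℝ)) y : ℝ) : ℂ)) ∂ν)
    (hνne : ν ≠ 0) :
    ∃ x₀ : EuclideanSpace ℝ (Fin d), ‖x₀‖ = 1 ∧
      (∃ c > 0, ∃ δ > 0, ∀ ξ : EuclideanSpace ℝ (Fin d), ξ ≠ 0 →
        Real.cos (Real.pi / 8) ≤ (inner ℝ x₀ ξ : ℝ) / ‖ξ‖ → ‖ξ‖ < δ →
          c ≤ ‖ψ ξ‖ / ‖ξ‖ ^ 2) ∧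
      (∀ α : ℝ, 2 < α →
        ¬ Filter.Tendsto (fun ξ : EuclideanSpace ℝ (Fin d) => ‖ψ ξ‖ / ‖ξ‖ ^ α)
          (nhdsWithin 0 {(0 : EuclideanSpace ℝ (Fin d))}ᶜ) (nhds 0)) := by
  obtain rfl : ψ = levySymbol ℓ Q ν := funext hψ
  obtain ⟨y₀, hy₀, hBpos⟩ := exists_ne_zero_measure_ball_pos hν0 hνne (c := 4⁻¹) (by norm_num)
  rw [inv_mul_eq_div] at hBpos
  have hy₀pos : 0 < ‖y₀‖ := norm_pos_iff.2 hy₀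
  have hBfin : ν (ball y₀ (‖y₀‖ / 4)) ≠ ∞ := by
    refine ne_top_of_le_ne_top
      (measure_le_norm_lt_top hν (r := 3 / 4 * ‖y₀‖) (by positivity)).ne
      (measure_mono fun y hy => ?_)
    have := norm_sub_norm_le y₀ y
    rw [mem_ball_iff_norm'] at hy
    show 3 / 4 * ‖y₀‖ ≤ ‖y‖
    linarith
  have hcone : ∃ c > 0, ∃ δ > 0, ∀ ξ, ξ ≠ 0 →
      Real.cos (Real.pi / 8) ≤ ⟪‖y₀‖⁻¹ • y₀, ξ⟫_ℝ / ‖ξ‖ → ‖ξ‖ < δ →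
        c ≤ ‖levySymbol ℓ Q ν ξ‖ / ‖ξ‖ ^ 2 :=
    ⟨_, mul_pos (by positivity) (ENNReal.toReal_pos hBpos.ne' hBfin), 2 / ‖y₀‖, by positivity,
      fun ξ hξ hcos hδ => le_norm_levySymbol_div_sq hν ℓ Q (hQpos ξ) hBfin hξ
        (norm_mul_norm_div_two_le_inner hy₀ hξ hcos) ((lt_div_iff₀ hy₀pos).1 hδ).le⟩
  exact ⟨_, norm_smul_inv_norm hy₀, hcone, fun α hα =>
    not_tendsto_div_rpow_of_cone (norm_smul_inv_norm hy₀) (Real.cos_le_one _) hcone hα⟩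

/-- the index β₀ of a Lévy symbol at the origin is at most 2:
on a suitable cone D, liminf_{ξ ∈ D, ξ → 0} |ψ(ξ)|/|ξ|² > 0, and hence
|ψ(ξ)|/|ξ|^α does not tend to 0 as ξ → 0 for any α > 2. -/
theorem levy_symbol_index_at_origin_le_two
    (d : ℕ) (hd : 1 ≤ d)
    (ℓ : EuclideanSpace ℝ (Fin d))
    (Q : EuclideanSpace ℝ (Fin d) →ₗ[ℝ] EuclideanSpace ℝ (Fin d))
    (hQsymm : ∀ ξ η, (inner ℝ (Q ξ) η : ℝ) = (inner ℝ ξ (Q η) : ℝ))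
    (hQpos : ∀ ξ, 0 ≤ (inner ℝ ξ (Q ξ) : ℝ))
    (ν : Measure (EuclideanSpace ℝ (Fin d)))
    (hν0 : ν {0} = 0)
    (hν : ∫⁻ y, ENNReal.ofReal (min 1 (‖y‖ ^ 2)) ∂ν < ⊤)
    (ψ : EuclideanSpace ℝ (Fin d) → ℂ)
    (hψ : ∀ ξ, ψ ξ = -Complex.I * ((inner ℝ ℓ ξ : ℝ) : ℂ)
        + (((1 / 2 : ℝ) * (inner ℝ ξ (Q ξ) : ℝ) : ℝ) : ℂ)
        + ∫ y, ((1 : ℂ) - Complex.exp (Complex.I * ((inner ℝ ξ y : ℝ) : ℂ))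
            + Complex.I * ((Set.indicator {y : EuclideanSpace ℝ (Fin d) | y ≠ 0 ∧ ‖y‖ < 1}
                (fun y => (inner ℝ ξ y : ℝ)) y : ℝ) : ℂ)) ∂ν)
    (hνne : ν ≠ 0) :
    ∃ x₀ : EuclideanSpace ℝ (Fin d), ‖x₀‖ = 1 ∧
      (∃ c > 0, ∃ δ > 0, ∀ ξ : EuclideanSpace ℝ (Fin d), ξ ≠ 0 →
        Real.cos (Real.pi / 8) ≤ (inner ℝ x₀ ξ : ℝ) / ‖ξ‖ → ‖ξ‖ < δ →
          c ≤ ‖ψ ξ‖ / ‖ξ‖ ^ 2) ∧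
      (∀ α : ℝ, 2 < α →
        ¬ Filter.Tendsto (fun ξ : EuclideanSpace ℝ (Fin d) => ‖ψ ξ‖ / ‖ξ‖ ^ α)
          (nhdsWithin 0 {(0 : EuclideanSpace ℝ (Fin d))}ᶜ) (nhds 0)) :=
  levy_symbol_index_at_origin_le_two_general d ℓ Q hQpos ν hν0 hν ψ hψ hνne
end

section
/- Let α, β > 0 and κ ∈ (0,1], and for t > 0 let S_t have the Gamma distribution with shape αt and rate β, i.e. P(S_t ∈ dx) = (β^{αt}/Γ(αt)) x^{αt-1} e^{-βx} 1_{(0,∞)}(x) dx. Define G(t) := E S_t^κ and H(t) := β^{-κ} · inf_{θ∈[κ,1]} (αt·Γ(θ))^{κ/θ}. Then: (i) G(t) = Γ(αt+κ)/(β^κ Γ(αt)) for all t > 0; (ii) lim_{t↓0} G(t)/H(t) = 1; and (iii) lim_{t→∞} G(t)/H(t) = 1. (In particular the bound E S_t^κ ≤ inf_{θ∈[κ,1]} [ t ∫_{(0,∞)} y^θ ν(dy) ]^{κ/θ} for the Gamma subordinator, whose Lévy measure is ν(dy) = α y^{-1} e^{-βy} 1_{(0,∞)}(y) dy with ∫ y^θ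 ν(dy) = α Γ(θ)/β^θ, is sharp both as t → 0 and as t → ∞.) -/
open MeasureTheory Filter Set

/-- The κ-th moment of the Gamma(αt, β) distribution. -/
noncomputable def gammaMoment (α β κ t : ℝ) : ℝ :=
  ∫ x in Set.Ioi (0 : ℝ),
    x ^ κ * (β ^ (α * t) / Real.Gamma (α * t) * x ^ (α * t - 1) * Real.exp (-β * x))

/-- The upper bound `β^{-κ} · inf_{θ ∈ [κ,1]} (α t Γ(θ))^{κ/θ}` from the moment
estimate for subordinators of bounded variation, evaluated for the Gamma
subordinator (whose Lévy measure ν(dy) = α y⁻¹ e^{-βy} dy satisfies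
∫ y^θ ν(dy) = α Γ(θ)/β^θ). -/
noncomputable def gammaMomentBound (α β κ t : ℝ) : ℝ :=
  β ^ (-κ) * sInf ((fun θ => (α * t * Real.Gamma θ) ^ (κ / θ)) '' Set.Icc κ 1)

/-!
Part (i) is Euler's integral. For the limits put `x = α t`; the ratio of moment to bound is
`Γ(x + κ) / (Γ(x) · m(x))` with `m(x) = inf_{θ ∈ [κ, 1]} (x Γ(θ))^{κ/θ}`. For small `x` the
infimum is attained at `θ = κ`: log-convexity of `Γ` bounds `log Γ(θ)` from below by a line through
`κ`, and `log x → -∞` beats its slope. The ratio is then `Γ(x + κ) / (Γ(x + 1) Γ(κ)) → 1`. For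
`x ≥ 1` the infimum is attained at `θ = 1` because `Γ ≥ 1` on `(0, 1]`, and the ratio
`Γ(x + κ) / (Γ(x) x^κ)` is squeezed between `(x / (x + κ))^{1-κ}` and `1` by Gautschi's
inequalities, both instances of the log-convexity of `Γ`.
-/

open Real Topology

theorem ConvexOn.add_mul_secant_le {𝕜 : Type*} [Field 𝕜] [LinearOrder 𝕜] [IsStrictOrderedRing 𝕜]
    {s : Set 𝕜} {f : 𝕜 → 𝕜} (hf : ConvexOn 𝕜 s f) {a x y : 𝕜}
    (ha : a ∈ s) (hx : x ∈ s) (hy : y ∈ s) (hax : a < x) (hxy : x ≤ y) :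
    f x + (y - x) * ((f a - f x) / (a - x)) ≤ f y := by
  rcases hxy.eq_or_lt with rfl | hxy
  · simp
  have h := hf.secant_mono hx ha hy hax.ne hxy.ne' (hax.trans hxy).le
  rw [le_div_iff₀ (sub_pos.2 hxy)] at h
  linarith

namespace Real

theorem Gamma_mul_add_mul_le_rpow_Gamma_mul_rpow_Gamma_of_nonneg {s t a b : ℝ} (hs : 0 < s)
    (ht : 0 < t) (ha : 0 ≤ a) (hb : 0 ≤ b) (hab : a + b = 1) :
    Gamma (a * s + b * t) ≤ Gamma s ^ a * Gamma t ^ b := by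
  have h := convexOn_log_Gamma.2 hs ht ha hb hab
  have hpos : 0 < a * s + b * t := convex_Ioi (0 : ℝ) hs ht ha hb hab
  simp only [smul_eq_mul, Function.comp_apply] at h
  rw [← exp_le_exp, exp_log (Gamma_pos_of_pos hpos), exp_add] at h
  rwa [rpow_def_of_pos (Gamma_pos_of_pos hs), rpow_def_of_pos (Gamma_pos_of_pos ht),
    mul_comm (log _) a, mul_comm (log _) b]

theorem Gamma_add_le_Gamma_mul_rpow {x κ : ℝ} (hx : 0 < x) (hκ0 : 0 ≤ κ) (hκ1 : κ ≤ 1) :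
    Gamma (x + κ) ≤ Gamma x * x ^ κ := by
  have hΓ := Gamma_pos_of_pos hx
  calc Gamma (x + κ) = Gamma ((1 - κ) * x + κ * (x + 1)) := by ring_nf
    _ ≤ Gamma x ^ (1 - κ) * Gamma (x + 1) ^ κ :=
      Gamma_mul_add_mul_le_rpow_Gamma_mul_rpow_Gamma_of_nonneg hx (by linarith)
        (by linarith) hκ0 (by ring)
    _ = (Gamma x ^ (1 - κ) * Gamma x ^ κ) * x ^ κ := by
      rw [Gamma_add_one hx.ne', mul_rpow hx.le hΓ.le]; ring
    _ = Gamma x * x ^ κ := by rw [← rpow_add hΓ, sub_add_cancel, rpow_one]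

theorem mul_Gamma_le_Gamma_add_mul_rpow {x κ : ℝ} (hx : 0 < x) (hκ0 : 0 ≤ κ) (hκ1 : κ ≤ 1) :
    x * Gamma x ≤ Gamma (x + κ) * (x + κ) ^ (1 - κ) := by
  have hxκ : 0 < x + κ := by linarith
  have hΓ := Gamma_pos_of_pos hxκ
  calc x * Gamma x = Gamma (κ * (x + κ) + (1 - κ) * (x + κ + 1)) := by
        rw [← Gamma_add_one hx.ne']; ring_nf
    _ ≤ Gamma (x + κ) ^ κ * Gamma (x + κ + 1) ^ (1 - κ) :=
      Gamma_mul_add_mul_le_rpow_Gamma_mul_rpow_Gamma_of_nonneg hxκ (by linarith)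
        hκ0 (by linarith) (by ring)
    _ = (Gamma (x + κ) ^ κ * Gamma (x + κ) ^ (1 - κ)) * (x + κ) ^ (1 - κ) := by
      rw [Gamma_add_one hxκ.ne', mul_rpow hxκ.le hΓ.le]; ring
    _ = Gamma (x + κ) * (x + κ) ^ (1 - κ) := by rw [← rpow_add hΓ, add_sub_cancel, rpow_one]

theorem tendsto_Gamma_add_div_Gamma_mul_rpow_atTop {κ : ℝ} (hκ0 : 0 ≤ κ) (hκ1 : κ ≤ 1) :
    Tendsto (fun x => Gamma (x + κ) / (Gamma x * x ^ κ)) atTop (𝓝 1) := by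
  have hfrac : Tendsto (fun x : ℝ => x / (x + κ)) atTop (𝓝 1) := by
    have h : Tendsto (fun x : ℝ => (1 + κ / x)⁻¹) atTop (𝓝 1) := by
      have h0 : Tendsto (fun x : ℝ => κ / x) atTop (𝓝 0) :=
        tendsto_const_nhds.div_atTop tendsto_id
      simpa using (h0.const_add 1).inv₀ (by norm_num)
    refine h.congr' ?_
    filter_upwards [eventually_gt_atTop 0] with x hx
    have : 0 < x + κ := by linarith
    field_simp
  have hlower : Tendsto (fun x : ℝ => (x / (x + κ)) ^ (1 - κ)) atTop (𝓝 1) := by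
    simpa using hfrac.rpow_const (Or.inl one_ne_zero)
  refine tendsto_of_tendsto_of_tendsto_of_le_of_le' hlower tendsto_const_nhds ?_ ?_
  all_goals filter_upwards [eventually_gt_atTop 0] with x hx
  · have hΓ := Gamma_pos_of_pos hx
    have hxκ : 0 < x + κ := by linarith
    rw [le_div_iff₀ (by positivity), div_rpow hx.le hxκ.le, div_mul_eq_mul_div,
      div_le_iff₀ (by positivity)]
    calc x ^ (1 - κ) * (Gamma x * x ^ κ) = x * Gamma x := by
          rw [mul_left_comm, ← rpow_add hx, sub_add_cancel, rpow_one, mul_comm]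
      _ ≤ Gamma (x + κ) * (x + κ) ^ (1 - κ) := mul_Gamma_le_Gamma_add_mul_rpow hx hκ0 hκ1
  · have hΓ := Gamma_pos_of_pos hx
    rw [div_le_one (by positivity)]
    exact Gamma_add_le_Gamma_mul_rpow hx hκ0 hκ1

theorem one_le_Gamma_of_le_one {θ : ℝ} (h0 : 0 < θ) (h1 : θ ≤ 1) : 1 ≤ Gamma θ :=
  Gamma_one ▸ Gamma_strictAntiOn_Ioc.antitoneOn ⟨h0, h1⟩ ⟨one_pos, le_rfl⟩ h1

end Real

noncomputable def momentBoundInf (x κ : ℝ) : ℝ :=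
  sInf ((fun θ => (x * Gamma θ) ^ (κ / θ)) '' Icc κ 1)

theorem momentBoundInf_eq_rpow_of_one_le {x κ : ℝ} (hκ0 : 0 < κ) (hκ1 : κ ≤ 1) (hx : 1 ≤ x) :
    momentBoundInf x κ = x ^ κ := by
  refine IsLeast.csInf_eq ⟨⟨1, ⟨hκ1, le_rfl⟩, by simp⟩, forall_mem_image.2 fun θ hθ => ?_⟩
  have hθ0 : 0 < θ := hκ0.trans_le hθ.1
  have hx0 : 0 < x := one_pos.trans_le hx
  have hxθ : x ^ θ ≤ x * Gamma θ :=
    calc x ^ θ ≤ x ^ (1 : ℝ) := rpow_le_rpow_of_exponent_le hx hθ.2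
      _ = x := rpow_one x
      _ ≤ x * Gamma θ := le_mul_of_one_le_right hx0.le (one_le_Gamma_of_le_one hθ0 hθ.2)
  calc x ^ κ = (x ^ θ) ^ (κ / θ) := by rw [← rpow_mul hx0.le, mul_div_cancel₀ _ hθ0.ne']
    _ ≤ (x * Gamma θ) ^ (κ / θ) := by gcongr

theorem mul_Gamma_le_rpow_of_log_le {x κ θ : ℝ} (hx : 0 < x) (hκ0 : 0 < κ) (hκθ : κ ≤ θ)
    (hlog : log x ≤ κ * ((log (Gamma (κ / 2)) - log (Gamma κ)) / (κ / 2 - κ))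
      - log (Gamma κ)) :
    x * Gamma κ ≤ (x * Gamma θ) ^ (κ / θ) := by
  have hθ0 : 0 < θ := hκ0.trans_le hκθ
  have hpos : 0 < x * Gamma κ := mul_pos hx (Gamma_pos_of_pos hκ0)
  have hposθ : 0 < x * Gamma θ := mul_pos hx (Gamma_pos_of_pos hθ0)
  have htangent := convexOn_log_Gamma.add_mul_secant_le (half_pos hκ0) hκ0 hθ0
    (half_lt_self hκ0) hκθ
  simp only [Function.comp_apply] at htangent
  rw [← log_le_log_iff hpos (rpow_pos_of_pos hposθ _), log_rpow hposθ, log_mul hx.ne'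
    (Gamma_pos_of_pos hκ0).ne', log_mul hx.ne' (Gamma_pos_of_pos hθ0).ne', div_mul_eq_mul_div,
    le_div_iff₀ hθ0]
  nlinarith [mul_le_mul_of_nonneg_left htangent hκ0.le, sub_nonneg.2 hκθ]

theorem eventually_momentBoundInf_eq {κ : ℝ} (hκ0 : 0 < κ) (hκ1 : κ ≤ 1) :
    ∀ᶠ x in 𝓝[>] 0, momentBoundInf x κ = x * Gamma κ := by
  filter_upwards [tendsto_log_nhdsGT_zero.eventually_le_atBot _, self_mem_nhdsWithin]
    with x hlog hx
  refine IsLeast.csInf_eq ⟨⟨κ, ⟨le_rfl, hκ1⟩, by simp [div_self hκ0.ne']⟩,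
    forall_mem_image.2 fun θ hθ => mul_Gamma_le_rpow_of_log_le hx hκ0 hθ.1 hlog⟩

theorem gammaMoment_eq {α β κ t : ℝ} (hat : 0 < α * t) (hβ : 0 < β) (hκ : 0 < α * t + κ) :
    gammaMoment α β κ t = Gamma (α * t + κ) / (β ^ κ * Gamma (α * t)) := by
  have hintegrand : ∀ x ∈ Ioi (0 : ℝ),
      x ^ κ * (β ^ (α * t) / Gamma (α * t) * x ^ (α * t - 1) * exp (-β * x))
        = β ^ (α * t) / Gamma (α * t) * (x ^ (α * t + κ - 1) * exp (-(β * x))) := by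
    intro x hx
    rw [show α * t + κ - 1 = κ + (α * t - 1) by ring, rpow_add hx, neg_mul]
    ring
  rw [gammaMoment, setIntegral_congr_fun measurableSet_Ioi hintegrand, integral_const_mul,
    integral_rpow_mul_exp_neg_mul_Ioi hκ hβ, div_rpow zero_le_one hβ.le, one_rpow,
    rpow_add hβ]
  have := Gamma_pos_of_pos hat
  field_simp

theorem gammaMoment_div_gammaMomentBound {α β κ t : ℝ} (hat : 0 < α * t) (hβ : 0 < β)
    (hκ : 0 < α * t + κ) :
    gammaMoment α β κ t / gammaMomentBound α β κ t
      = Gamma (α * t + κ) / (Gamma (α * t) * momentBoundInf (α * t) κ) := by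
  rw [gammaMoment_eq hat hβ hκ, gammaMomentBound, ← momentBoundInf, rpow_neg hβ.le]
  have := (rpow_pos_of_pos hβ κ).ne'
  field_simp

theorem tendsto_Gamma_add_div_Gamma_mul_momentBoundInf_nhdsGT {κ : ℝ} (hκ0 : 0 < κ)
    (hκ1 : κ ≤ 1) :
    Tendsto (fun x => Gamma (x + κ) / (Gamma x * momentBoundInf x κ)) (𝓝[>] 0) (𝓝 1) := by
  have hGamma : ∀ {y : ℝ}, 0 < y → ContinuousAt Gamma y := fun hy =>
    differentiableOn_Gamma_Ioi.continuousOn.continuousAt (Ioi_mem_nhds hy)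
  have hcont : ContinuousAt (fun x => Gamma (x + κ) / (Gamma (x + 1) * Gamma κ)) 0 := by
    refine ((hGamma ?_).comp (by fun_prop)).div (((hGamma ?_).comp (by fun_prop)).mul
      continuousAt_const) ?_ <;> simp [hκ0, (Gamma_pos_of_pos hκ0).ne']
  have hlim := hcont.tendsto.mono_left (nhdsWithin_le_nhds (s := Ioi 0))
  simp only [zero_add, Gamma_one, one_mul, div_self (Gamma_pos_of_pos hκ0).ne'] at hlim
  refine hlim.congr' ?_
  filter_upwards [eventually_momentBoundInf_eq hκ0 hκ1, self_mem_nhdsWithin] with x hinf hx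
  rw [hinf, Gamma_add_one hx.ne']
  ring

theorem tendsto_Gamma_add_div_Gamma_mul_momentBoundInf_atTop {κ : ℝ} (hκ0 : 0 < κ)
    (hκ1 : κ ≤ 1) :
    Tendsto (fun x => Gamma (x + κ) / (Gamma x * momentBoundInf x κ)) atTop (𝓝 1) := by
  refine (tendsto_Gamma_add_div_Gamma_mul_rpow_atTop hκ0.le hκ1).congr' ?_
  filter_upwards [eventually_ge_atTop 1] with x hx
  rw [momentBoundInf_eq_rpow_of_one_le hκ0 hκ1 hx]

/-- for the Gamma subordinator the moment estimate
`E S_t^κ ≤ inf_{θ∈[κ,1]} [t ∫ y^θ ν(dy)]^{κ/θ}` is sharp both as t → 0 and as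
t → ∞: (i) E S_t^κ = Γ(αt+κ)/(β^κ Γ(αt)); (ii) and (iii) the quotient of moment
and bound tends to 1 at 0⁺ and at ∞. -/
theorem gamma_subordinator_moment_sharp
    (α β κ : ℝ) (hα : 0 < α) (hβ : 0 < β) (hκ0 : 0 < κ) (hκ1 : κ ≤ 1) :
    (∀ t > 0, gammaMoment α β κ t =
      Real.Gamma (α * t + κ) / (β ^ κ * Real.Gamma (α * t)))
    ∧ Filter.Tendsto (fun t => gammaMoment α β κ t / gammaMomentBound α β κ t)
        (nhdsWithin 0 (Set.Ioi 0)) (nhds 1)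
    ∧ Filter.Tendsto (fun t => gammaMoment α β κ t / gammaMomentBound α β κ t)
        Filter.atTop (nhds 1) := by
  have hratio : ∀ t > 0, gammaMoment α β κ t / gammaMomentBound α β κ t
      = Gamma (α * t + κ) / (Gamma (α * t) * momentBoundInf (α * t) κ) := fun t ht =>
    gammaMoment_div_gammaMomentBound (mul_pos hα ht) hβ (add_pos (mul_pos hα ht) hκ0)
  have hscale₀ : Tendsto (fun t => α * t) (𝓝[>] 0) (𝓝[>] 0) :=
    tendsto_nhdsWithin_iff.2
      ⟨((continuous_const_mul α).tendsto' 0 0 (mul_zero α)).mono_left nhdsWithin_le_nhds,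
        eventually_mem_nhdsWithin.mono fun t ht => mul_pos hα ht⟩
  have hscale : Tendsto (fun t => α * t) atTop atTop := tendsto_id.const_mul_atTop hα
  refine ⟨fun t ht => gammaMoment_eq (mul_pos hα ht) hβ (add_pos (mul_pos hα ht) hκ0), ?_, ?_⟩
  · refine ((tendsto_Gamma_add_div_Gamma_mul_momentBoundInf_nhdsGT hκ0 hκ1).comp
      hscale₀).congr' ?_
    filter_upwards [self_mem_nhdsWithin] with t ht using (hratio t ht).symm
  · refine ((tendsto_Gamma_add_div_Gamma_mul_momentBoundInf_atTop hκ0 hκ1).comp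
      hscale).congr' ?_
    filter_upwards [eventually_gt_atTop 0] with t ht using (hratio t ht).symm
end
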